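/- arXiv:2510.17656 — 5 statements merged into one kernel-verified Lean document; each statement's English description precedes it below -/
import Mathlib

section
/- Let W be an L^1-graphon on K = Λ×{+,−}, let K = Ω_0 ⊔ ⊔_{i∈I} Ω_i be the decomposition of the implication digraphon →W into strong components, and let I* ⊆ I be the indices of the contradictory components. Then for each i ∈ I* there exists a measurable set Z_i ⊆ Λ such that Ω_i equals Z_i × {+,−} modulo a κ-null set. -/
open MeasureTheory ENNReal Filter Topology

noncomputable section

/-- Literals on `n` Boolean variables: a variable index together with a sign
(`true` = positive literal, `false` = negated literal). -/
abbrev Lit (n : ℕ) := Fin n × Bool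

/-- Negation of a literal. -/
def negLit {n : ℕ} (l : Lit n) : Lit n := (l.1, !l.2)

/-- The negation map on `K = Λ × Bool`. -/
def negK {Λ : Type*} (z : Λ × Bool) : Λ × Bool := (z.1, !z.2)

/-- The uniform probability measure on the two-element sign space `Bool`. -/
def boolMeasure : Measure Bool := (PMF.uniformOfFintype Bool).toMeasure

instance : IsProbabilityMeasure boolMeasure := by
  unfold boolMeasure; infer_instance

/-- The product measure `κ = λ × uniform` on `K = Λ × Bool`. -/
def kappa {Λ : Type*} [MeasurableSpace Λ] (lam : Measure Λ) : Measure (Λ × Bool) :=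
  lam.prod boolMeasure

instance {Λ : Type*} [MeasurableSpace Λ] (lam : Measure Λ) [IsProbabilityMeasure lam] :
    IsProbabilityMeasure (kappa lam) := by
  unfold kappa; infer_instance

/-- The implication digraphon `→W (x,y) = W(¬x, y)`. -/
def implKer {Λ : Type*} (W : (Λ × Bool) × (Λ × Bool) → ℝ) : (Λ × Bool) × (Λ × Bool) → ℝ :=
  fun p => W (negK p.1, p.2)

/-- Restriction `Γ⟦A⟧` of a kernel to a set: equals `Γ` on `A ×ˢ A`, `0` elsewhere. -/
def restrictKer {α : Type*} (Γ : α × α → ℝ) (A : Set α) : α × α → ℝ :=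
  (A ×ˢ A).indicator Γ

/-- Clause slots for a 2-SAT formula on `n` variables: `(i, j, q, s)` stands for the
clause `{q v_i, s v_j}`; only slots with `i < j` are used. -/
abbrev Slot (n : ℕ) := Fin n × Fin n × Bool × Bool

/-- All clause slots `(i,j,q,s)` with `i < j`. -/
def slots (n : ℕ) : Finset (Slot n) := Finset.univ.filter (fun c => c.1 < c.2.1)

/-- A 2-CNF formula (a set of clause slots) is satisfiable. -/
def SatFormula {n : ℕ} (G : Finset (Slot n)) : Prop :=
  ∃ σ : Fin n → Bool, ∀ c ∈ G, σ c.1 = c.2.2.1 ∨ σ c.2.1 = c.2.2.2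

/-- Probability of including the clause with slot `c` in `TwoSAT(n, W)` given the
sampled types `x`. -/
def clauseP {Λ : Type*} (W : (Λ × Bool) × (Λ × Bool) → ℝ) (n : ℕ) (x : Fin n → Λ)
    (c : Slot n) : ℝ :=
  min 1 (W ((x c.1, c.2.2.1), (x c.2.1, c.2.2.2)) / (2 * n))

/-- The probability, conditionally on the sampled types `x`, that the random formula
`TwoSAT(n, W)` equals exactly `G`. -/
def formulaWeight {Λ : Type*} (W : (Λ × Bool) × (Λ × Bool) → ℝ) (n : ℕ) (x : Fin n → Λ)
    (G : Finset (Slot n)) : ℝ :=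
  (∏ c ∈ G, clauseP W n x c) * ∏ c ∈ (slots n) \ G, (1 - clauseP W n x c)

/-- Probability that the random formula `TwoSAT(n, W)` satisfies the event `E`. -/
def eventProb {Λ : Type*} [MeasurableSpace Λ] (lam : Measure Λ)
    (W : (Λ × Bool) × (Λ × Bool) → ℝ) (n : ℕ) (E : Finset (Slot n) → Prop) : ℝ :=
  ∫ x : Fin n → Λ, ∑ G ∈ (slots n).powerset,
    Set.indicator {G | E G} (formulaWeight W n x) G ∂(Measure.pi fun _ => lam)

/-- Probability that the random 2-SAT formula `TwoSAT(n, W)` is satisfiable. -/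
def satProb {Λ : Type*} [MeasurableSpace Λ] (lam : Measure Λ)
    (W : (Λ × Bool) × (Λ × Bool) → ℝ) (n : ℕ) : ℝ :=
  eventProb lam W n SatFormula

/-- A set `X` of positive measure is strongly connected in the kernel `Γ`. -/
def StronglyConnectedIn {Ω : Type*} [MeasurableSpace Ω] (μ : Measure Ω)
    (Γ : Ω × Ω → ℝ) (X : Set Ω) : Prop :=
  0 < μ X ∧ ∀ A B : Set Ω, MeasurableSet A → MeasurableSet B → A ∪ B = X →
    Disjoint A B → 0 < μ A → 0 < μ B → 0 < ∫ p in A ×ˢ B, Γ p ∂(μ.prod μ)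

/-- `X` is a strong component of the kernel `Γ`. -/
def IsStrongComponent {Ω : Type*} [MeasurableSpace Ω] (μ : Measure Ω)
    (Γ : Ω × Ω → ℝ) (X : Set Ω) : Prop :=
  StronglyConnectedIn μ Γ X ∧
    ∀ Y : Set Ω, MeasurableSet Y → 0 < μ (Y ∩ X) → 0 < μ (Y \ X) →
      ¬ StronglyConnectedIn μ Γ Y

/-- `X` is fragmented in the kernel `Γ`. -/
def FragmentedIn {Ω : Type*} [MeasurableSpace Ω] (μ : Measure Ω)
    (Γ : Ω × Ω → ℝ) (X : Set Ω) : Prop :=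
  ∀ Y ⊆ X, MeasurableSet Y → ¬ StronglyConnectedIn μ Γ Y

/-- A subset of `K = Λ × Bool` is contradictory. -/
def ContradictorySet {Λ : Type*} [MeasurableSpace Λ] (lam : Measure Λ)
    (X : Set (Λ × Bool)) : Prop :=
  0 < lam {x | (x, true) ∈ X ∧ (x, false) ∈ X}

instance : Fact ((1 : ℝ≥0∞) ≤ 3) := ⟨by norm_num⟩

/-- `T` is the integral kernel operator of the kernel `Γ` on `L^p`. -/
def RepKernel {Ω : Type*} [MeasurableSpace Ω] (μ : Measure Ω) (p : ℝ≥0∞) [Fact (1 ≤ p)]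
    (Γ : Ω × Ω → ℝ) (T : Lp ℂ p μ →L[ℂ] Lp ℂ p μ) : Prop :=
  ∀ f : Lp ℂ p μ, ∀ᵐ x ∂μ, T f x = ∫ y, f y * (Γ (y, x) : ℂ) ∂μ

end

/-!
The map `(x, y) ↦ (¬y, ¬x)` preserves `κ × κ` and, because `W` is symmetric, also the
implication digraphon `→W(x, y) = W(¬x, y)`. Hence `¬X` is strongly connected whenever `X` is.
If `X` is a contradictory strong component, then `X ∩ ¬X` has positive measure, so maximality of
`X` forces `¬X = X` up to a null set; such a set is `Z × {+,−}` with `Z = {x | (x, +) ∈ X}`.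
-/

open Function

def reflectAlong {Ω : Type*} (σ : Ω → Ω) (p : Ω × Ω) : Ω × Ω := (σ p.2, σ p.1)

theorem involutive_reflectAlong {Ω : Type*} {σ : Ω → Ω} (hσ : Involutive σ) :
    Involutive (reflectAlong σ) := by
  intro p
  simp [reflectAlong, hσ p.1, hσ p.2]

theorem MeasureTheory.MeasurePreserving.measure_preimage_of_involutive {Ω : Type*}
    [MeasurableSpace Ω] {μ : Measure Ω} {σ : Ω → Ω} (hσ : Involutive σ) (hμ : MeasurePreserving σ μ μ)
    (s : Set Ω) : μ (σ ⁻¹' s) = μ s :=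
  hμ.measure_preimage_emb (MeasurableEquiv.ofInvolutive σ hσ hμ.measurable).measurableEmbedding s

section Reflection

variable {Ω : Type*} [MeasurableSpace Ω] {μ : Measure Ω} [SFinite μ] {Γ : Ω × Ω → ℝ}
  {σ : Ω → Ω}

theorem measurePreserving_reflectAlong (hμ : MeasurePreserving σ μ μ) :
    MeasurePreserving (reflectAlong σ) (μ.prod μ) (μ.prod μ) :=
  (hμ.prod hμ).comp Measure.measurePreserving_swap

theorem setIntegral_preimage_prod_preimage_of_involutive (hσ : Involutive σ)
    (hμ : MeasurePreserving σ μ μ) (hΓ : ∀ x y, Γ (σ y, σ x) = Γ (x, y)) (A B : Set Ω) :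
    ∫ p in (σ ⁻¹' B) ×ˢ (σ ⁻¹' A), Γ p ∂(μ.prod μ) = ∫ p in A ×ˢ B, Γ p ∂(μ.prod μ) := by
  let ρ := MeasurableEquiv.ofInvolutive (reflectAlong σ) (involutive_reflectAlong hσ)
    (measurePreserving_reflectAlong hμ).measurable
  have hpre : reflectAlong σ ⁻¹' ((σ ⁻¹' B) ×ˢ (σ ⁻¹' A)) = A ×ˢ B := by
    ext p
    simp [reflectAlong, hσ p.1, hσ p.2, and_comm]
  rw [← (measurePreserving_reflectAlong hμ).setIntegral_preimage_emb ρ.measurableEmbedding, hpre]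
  congr 1
  funext p
  exact hΓ p.1 p.2

theorem StronglyConnectedIn.preimage_of_involutive (hσ : Involutive σ)
    (hμ : MeasurePreserving σ μ μ) (hΓ : ∀ x y, Γ (σ y, σ x) = Γ (x, y)) {X : Set Ω}
    (hX : StronglyConnectedIn μ Γ X) : StronglyConnectedIn μ Γ (σ ⁻¹' X) := by
  refine ⟨(hμ.measure_preimage_of_involutive hσ X).symm ▸ hX.1, ?_⟩
  intro A B hA hB hAB hdisj hApos hBpos
  have hBA : σ ⁻¹' B ∪ σ ⁻¹' A = X := by
    rw [← Set.preimage_union, Set.union_comm, hAB, hσ.preimage X]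
  rw [← setIntegral_preimage_prod_preimage_of_involutive hσ hμ hΓ]
  exact hX.2 _ _ (hB.preimage hμ.measurable) (hA.preimage hμ.measurable) hBA
    (hdisj.symm.preimage σ) (hμ.measure_preimage_of_involutive hσ B ▸ hBpos)
    (hμ.measure_preimage_of_involutive hσ A ▸ hApos)

theorem IsStrongComponent.preimage_ae_eq_of_involutive (hσ : Involutive σ)
    (hμ : MeasurePreserving σ μ μ) (hΓ : ∀ x y, Γ (σ y, σ x) = Γ (x, y)) {X : Set Ω}
    (hXm : MeasurableSet X) (hX : IsStrongComponent μ Γ X) (hpos : 0 < μ (σ ⁻¹' X ∩ X)) :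
    σ ⁻¹' X =ᵐ[μ] X := by
  have hnull : μ (σ ⁻¹' X \ X) = 0 := by
    by_contra hne
    exact hX.2 _ (hXm.preimage hμ.measurable) hpos (pos_iff_ne_zero.2 hne)
      (hX.1.preimage_of_involutive hσ hμ hΓ)
  refine ae_eq_set.2 ⟨hnull, ?_⟩
  rw [← hμ.measure_preimage_of_involutive hσ (X \ σ ⁻¹' X), Set.preimage_sdiff, hσ.preimage X]
  exact hnull

end Reflection

theorem negK_involutive {Λ : Type*} : Involutive (negK : Λ × Bool → Λ × Bool) := by
  intro z
  simp [negK]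

theorem implKer_negK {Λ : Type*} {W : (Λ × Bool) × (Λ × Bool) → ℝ}
    (hW : ∀ z w, W (z, w) = W (w, z)) (x y : Λ × Bool) :
    implKer W (negK y, negK x) = implKer W (x, y) := by
  simp only [implKer, negK_involutive y]
  exact hW _ _

section Negation

variable {Λ : Type*} [MeasurableSpace Λ]

theorem boolMeasure_singleton (b : Bool) : boolMeasure {b} = 2⁻¹ := by
  rw [boolMeasure, PMF.toMeasure_apply_singleton _ _ (measurableSet_singleton b),
    PMF.uniformOfFintype_apply]
  simp

theorem measurePreserving_not_boolMeasure : MeasurePreserving not boolMeasure boolMeasure := by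
  refine ⟨measurable_of_countable _, Measure.ext_iff_singleton.2 fun b => ?_⟩
  have hpre : not ⁻¹' {b} = {!b} := by
    ext c
    cases b <;> cases c <;> simp
  rw [Measure.map_apply (measurable_of_countable _) (measurableSet_singleton b), hpre,
    boolMeasure_singleton, boolMeasure_singleton]

theorem measurePreserving_negK (lam : Measure Λ) [SFinite lam] :
    MeasurePreserving negK (kappa lam) (kappa lam) :=
  (MeasurePreserving.id lam).prod measurePreserving_not_boolMeasure

theorem ContradictorySet.kappa_preimage_negK_inter_pos {lam : Measure Λ} [SFinite lam]
    {X : Set (Λ × Bool)} (hX : ContradictorySet lam X) : 0 < kappa lam (negK ⁻¹' X ∩ X) := by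
  have hsub : {x | (x, true) ∈ X ∧ (x, false) ∈ X} ×ˢ {true} ⊆ negK ⁻¹' X ∩ X := by
    rintro ⟨x, b⟩ ⟨⟨htrue, hfalse⟩, rfl : b = true⟩
    exact ⟨hfalse, htrue⟩
  refine lt_of_lt_of_le ?_ (measure_mono hsub)
  rw [kappa, Measure.prod_prod, boolMeasure_singleton]
  exact ENNReal.mul_pos hX.ne' (by simp)

theorem ae_eq_prod_univ_of_preimage_negK_ae_eq {μ : Measure (Λ × Bool)} {X : Set (Λ × Bool)}
    (hX : negK ⁻¹' X =ᵐ[μ] X) : X =ᵐ[μ] {x | (x, true) ∈ X} ×ˢ Set.univ := by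
  filter_upwards [hX] with ⟨x, b⟩ (hx : ((x, b) ∈ negK ⁻¹' X) = ((x, b) ∈ X))
  show ((x, b) ∈ X) = ((x, b) ∈ {x | (x, true) ∈ X} ×ˢ Set.univ)
  cases b
  · simpa [negK, eq_comm] using hx
  · simp

end Negation

theorem contradictory_component_is_product_general
    {Λ : Type*} [MeasurableSpace Λ]
    (lam : Measure Λ) [IsProbabilityMeasure lam]
    (W : (Λ × Bool) × (Λ × Bool) → ℝ)
    (hWsymm : ∀ z w, W (z, w) = W (w, z))
    -- a decomposition of the implication digraphon `→W` into strong components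
    (I : Type)
    (Om : I → Set (Λ × Bool))
    (hOmmeas : ∀ i, MeasurableSet (Om i))
    (hcomp : ∀ i, IsStrongComponent (kappa lam) (implKer W) (Om i)) :
    ∀ i, ContradictorySet lam (Om i) →
      ∃ Z : Set Λ, MeasurableSet Z ∧
        kappa lam (symmDiff (Om i) (Z ×ˢ (Set.univ : Set Bool))) = 0 := by
  intro i hcontra
  have hsymm : negK ⁻¹' Om i =ᵐ[kappa lam] Om i :=
    (hcomp i).preimage_ae_eq_of_involutive negK_involutive (measurePreserving_negK lam)
      (implKer_negK hWsymm) (hOmmeas i) hcontra.kappa_preimage_negK_inter_pos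
  exact ⟨_, (hOmmeas i).preimage measurable_prodMk_right,
    measure_symmDiff_eq_zero_iff.2 (ae_eq_prod_univ_of_preimage_negK_ae_eq hsymm)⟩

/-- Every contradictory strong component of the implication digraphon
of an `L¹`-graphon is, modulo a null set, of the form `Z × {+,−}`. -/
theorem contradictory_component_is_product
    {Λ : Type*} [MeasurableSpace Λ] [TopologicalSpace Λ] [PolishSpace Λ] [BorelSpace Λ]
    (lam : Measure Λ) [IsProbabilityMeasure lam]
    (W : (Λ × Bool) × (Λ × Bool) → ℝ)
    (hWmeas : Measurable W)
    (hWnonneg : ∀ z, 0 ≤ W z)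
    (hWsymm : ∀ z w, W (z, w) = W (w, z))
    (hW1 : MemLp W 1 ((kappa lam).prod (kappa lam)))
    -- a decomposition of the implication digraphon `→W` into strong components
    (I : Type) [Countable I]
    (Om0 : Set (Λ × Bool)) (Om : I → Set (Λ × Bool))
    (hOm0meas : MeasurableSet Om0) (hOmmeas : ∀ i, MeasurableSet (Om i))
    (hcover : Om0 ∪ (⋃ i, Om i) = Set.univ)
    (hdisj : Pairwise (Function.onFun Disjoint Om))
    (hdisj0 : ∀ i, Disjoint Om0 (Om i))
    (hfrag : Om0 = ∅ ∨ FragmentedIn (kappa lam) (implKer W) Om0)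
    (hcomp : ∀ i, IsStrongComponent (kappa lam) (implKer W) (Om i)) :
    ∀ i, ContradictorySet lam (Om i) →
      ∃ Z : Set Λ, MeasurableSet Z ∧
        kappa lam (symmDiff (Om i) (Z ×ˢ (Set.univ : Set Bool))) = 0 :=
  contradictory_component_is_product_general lam W hWsymm I Om hOmmeas hcomp
end

section
/- Suppose φ is an unsatisfiable 2-CNF formula on variables v_1,…,v_n. Then the implication digraph ImplDig(φ) contains a basis u_1,…,u_k of a (k,a,b)-bicycle (for some k ≥ 2, 2 ≤ a ≤ k, 1 ≤ b ≤ k−1) all of whose edges, together with the two extra edges (¬u_a, u_1) and (u_k, ¬u_b), are edges of a single contradictory directed cycle of ImplDig(φ). -/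
/-! Unsatisfiability gives a literal `x` with `x ⇝ ¬x ⇝ x`: otherwise making a literal true iff
it comes after its negation in a linear extension of the condensation of the implication digraph
satisfies every clause. Among closed walks through a complementary pair take one of least length,
split as `x ⇝ ¬x ⇝ x`. Its halves are paths, and if they meet at `y`, rerouting through the
contrapositives of the halves of `¬x ⇝ y ⇝ x` gives a pair through `y` of the same length whose
halves are disjoint: a simple contradictory cycle. On such a cycle a longest arc of literals on
pairwise distinct variables is a bicycle basis, since by maximality the literals just before and
just after the arc are negations of literals on it. -/

noncomputable section

/-- The implication digraph of a 2-CNF formula: for each clause `{l₁, l₂}` it contains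
the directed edges `(¬l₁, l₂)` and `(¬l₂, l₁)`. -/
def implEdges {n : ℕ} (φ : Finset (Lit n × Lit n)) : Finset (Lit n × Lit n) :=
  φ.image (fun c => (negLit c.1, c.2)) ∪ φ.image (fun c => (negLit c.2, c.1))

/-- A 2-CNF formula is satisfiable: a literal `(i, s)` is true under an assignment `σ`
iff `σ i = s`, and every clause must contain a true literal. -/
def Satisfiable2CNF {n : ℕ} (φ : Finset (Lit n × Lit n)) : Prop :=
  ∃ σ : Fin n → Bool, ∀ c ∈ φ, σ c.1.1 = c.1.2 ∨ σ c.2.1 = c.2.2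


@[simp] lemma negLit_negLit {n : ℕ} (l : Lit n) : negLit (negLit l) = l := by
  simp [negLit]

@[simp] lemma negLit_fst {n : ℕ} (l : Lit n) : (negLit l).1 = l.1 := rfl

lemma negLit_ne_self {n : ℕ} (l : Lit n) : negLit l ≠ l := by
  simp [negLit, Prod.ext_iff]

lemma negLit_injective {n : ℕ} : Function.Injective (negLit (n := n)) :=
  Function.LeftInverse.injective negLit_negLit

lemma eq_negLit_of_fst_eq {n : ℕ} {a b : Lit n} (h : a.1 = b.1) (hne : a ≠ b) :
    a = negLit b := by
  obtain ⟨i, s⟩ := a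
  obtain ⟨j, t⟩ := b
  cases s <;> cases t <;> simp_all [negLit]

/-- `RelWalk r a b l`: an `r`-walk from `a` to `b` whose vertices after `a` are, in order, `l`. -/
inductive RelWalk {α : Type*} (r : α → α → Prop) : α → α → List α → Prop
  | nil (a : α) : RelWalk r a a []
  | cons {a b c : α} {l : List α} : r a b → RelWalk r b c l → RelWalk r a c (b :: l)

namespace RelWalk

variable {α : Type*} {r : α → α → Prop} {a b c v : α} {l l₁ l₂ : List α}

lemma append (w₁ : RelWalk r a b l₁) (w₂ : RelWalk r b c l₂) : RelWalk r a c (l₁ ++ l₂) := by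
  induction w₁ with
  | nil => exact w₂
  | cons h _ ih => exact .cons h (ih w₂)

lemma snoc (w : RelWalk r a b l) (h : r b c) : RelWalk r a c (l ++ [c]) :=
  w.append (.cons h (.nil c))

lemma mem_of_ne (w : RelWalk r a b l) (hab : a ≠ b) : b ∈ l := by
  induction w with
  | nil => exact absurd rfl hab
  | @cons _ b' c _ _ _ ih =>
    by_cases hb : b' = c
    · exact hb ▸ List.mem_cons_self
    · exact List.mem_cons_of_mem _ (ih hb)

lemma ne_nil (w : RelWalk r a b l) (hab : a ≠ b) : l ≠ [] :=
  List.ne_nil_of_mem (w.mem_of_ne hab)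

lemma split (w : RelWalk r a b l) (hv : v ∈ a :: l) :
    ∃ l₁ l₂, l = l₁ ++ l₂ ∧ RelWalk r a v l₁ ∧ RelWalk r v b l₂ := by
  induction w with
  | nil a =>
    obtain rfl := List.mem_singleton.mp hv
    exact ⟨[], [], rfl, .nil _, .nil _⟩
  | cons h w ih =>
    rcases List.mem_cons.mp hv with rfl | hv
    · exact ⟨[], _, rfl, .nil _, .cons h w⟩
    · obtain ⟨l₁, l₂, rfl, w₁, w₂⟩ := ih hv
      exact ⟨_ :: l₁, l₂, rfl, .cons h w₁, w₂⟩

lemma exists_shorter_of_not_nodup (w : RelWalk r a b l) (hl : ¬ (a :: l).Nodup) :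
    ∃ l', RelWalk r a b l' ∧ l'.length < l.length := by
  induction w with
  | nil => simp at hl
  | @cons a b' c l h w ih =>
    by_cases ha : a ∈ b' :: l
    · obtain ⟨l₁, l₂, rfl, -, w₂⟩ := w.split ha
      exact ⟨l₂, w₂, by simp⟩
    · obtain ⟨l', w', hlt⟩ := ih (fun hnd => hl (List.nodup_cons.mpr ⟨ha, hnd⟩))
      exact ⟨_ :: l', .cons h w', by simpa using hlt⟩

lemma rotate (w : RelWalk r a a l) (hv : v ∈ l) : ∃ l', RelWalk r v v l' ∧ l'.Perm l := by
  obtain ⟨l₁, l₂, rfl, w₁, w₂⟩ := w.split (List.mem_cons_of_mem _ hv)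
  exact ⟨l₂ ++ l₁, w₂.append w₁, List.perm_append_comm⟩

lemma of_reflTransGen (h : Relation.ReflTransGen r a b) : ∃ l, RelWalk r a b l := by
  induction h with
  | refl => exact ⟨[], .nil a⟩
  | tail _ hbc ih =>
    obtain ⟨l, w⟩ := ih
    exact ⟨_, w.snoc hbc⟩

lemma isChain (w : RelWalk r a b l) : (a :: l).IsChain r := by
  induction w with
  | nil => exact .singleton _
  | cons h _ ih => exact .cons_cons h ih

lemma getElem_length (w : RelWalk r a b l) : (a :: l)[l.length] = b := by
  induction w with
  | nil => rfl
  | cons _ _ ih => exact ih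

/-- Position `t` carries `l[t]`, so the wrap-around edge `l[L-1] → l[0]` is the first step out of
`a = l[L-1]`. -/
lemma exists_fin_cycle {L : ℕ} [NeZero L] (w : RelWalk r a a l) (hl : l.Nodup)
    (hL : l.length = L) :
    ∃ u : Fin L → α, Function.Injective u ∧ (∀ t, r (u t) (u (t + 1))) ∧
      ∀ x ∈ l, ∃ t, u t = x := by
  subst hL
  refine ⟨fun t => l[t], fun s t hst => Fin.ext (hl.getElem_inj_iff.mp hst), fun t => ?_,
    fun x hx => ?_⟩
  · have hstep := List.isChain_iff_getElem.mp w.isChain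
    show r l[t] l[t + 1]
    generalize hs : t + 1 = s
    have hsv : (s : ℕ) = ((t : ℕ) + 1) % l.length := by
      rw [← hs, Fin.val_add, Fin.val_one', Nat.add_mod_mod]
    rcases Nat.lt_or_ge ((t : ℕ) + 1) l.length with ht | ht
    · rw [Nat.mod_eq_of_lt ht] at hsv
      have h := hstep ((t : ℕ) + 1) (by simp; omega)
      rw [List.getElem_cons_succ, List.getElem_cons_succ] at h
      simpa [hsv] using h
    · have htop : (t : ℕ) + 1 = l.length := by omega
      rw [htop, Nat.mod_self] at hsv
      have hlast : l[(t : ℕ)] = a := by simpa [← htop] using w.getElem_length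
      simpa [hsv, hlast] using hstep 0 (by simp; omega)
  · obtain ⟨t, ht, rfl⟩ := List.getElem_of_mem hx
    exact ⟨⟨t, ht⟩, rfl⟩

end RelWalk

def implAdj {n : ℕ} (φ : Finset (Lit n × Lit n)) (a b : Lit n) : Prop := (a, b) ∈ implEdges φ

section ImplicationDigraph

variable {n : ℕ} {φ : Finset (Lit n × Lit n)} {a b : Lit n} {l : List (Lit n)}

lemma implAdj_of_mem_left {c : Lit n × Lit n} (hc : c ∈ φ) : implAdj φ (negLit c.1) c.2 :=
  Finset.mem_union_left _ (Finset.mem_image_of_mem _ hc)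

lemma implAdj_of_mem_right {c : Lit n × Lit n} (hc : c ∈ φ) : implAdj φ (negLit c.2) c.1 :=
  Finset.mem_union_right _ (Finset.mem_image_of_mem _ hc)

lemma implAdj.negLit (h : implAdj φ a b) : implAdj φ (negLit b) (negLit a) := by
  simp only [implAdj, implEdges, Finset.mem_union, Finset.mem_image, Prod.mk.injEq] at h ⊢
  rcases h with ⟨c, hc, rfl, rfl⟩ | ⟨c, hc, rfl, rfl⟩
  · exact .inr ⟨c, hc, rfl, by simp⟩
  · exact .inl ⟨c, hc, rfl, by simp⟩

lemma implAdj.fst_ne (hvars : ∀ c ∈ φ, c.1.1 ≠ c.2.1) (h : implAdj φ a b) : a.1 ≠ b.1 := by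
  simp only [implAdj, implEdges, Finset.mem_union, Finset.mem_image, Prod.mk.injEq] at h
  rcases h with ⟨c, hc, rfl, rfl⟩ | ⟨c, hc, rfl, rfl⟩
  · exact hvars c hc
  · exact (hvars c hc).symm

lemma mem_map_negLit_iff {v : Lit n} {l : List (Lit n)} : v ∈ l.map negLit ↔ negLit v ∈ l := by
  rw [← List.mem_map_of_injective negLit_injective, List.map_map]
  simp [Function.comp_def]

lemma RelWalk.exists_contra_mem_append {r : Lit n → Lit n → Prop} {x : Lit n}
    {A B : List (Lit n)} (w₁ : RelWalk r x (negLit x) A) (w₂ : RelWalk r (negLit x) x B) :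
    ∃ v ∈ A ++ B, negLit v ∈ A ++ B :=
  ⟨negLit x, List.mem_append_left _ (w₁.mem_of_ne (negLit_ne_self x).symm),
    by simpa using List.mem_append_right _ (w₂.mem_of_ne (negLit_ne_self x))⟩

lemma RelWalk.negLit_reverse (w : RelWalk (implAdj φ) a b l) :
    ∃ l', RelWalk (implAdj φ) (negLit b) (negLit a) l' ∧
      negLit b :: l' = ((a :: l).map negLit).reverse := by
  induction w with
  | nil => exact ⟨[], .nil _, rfl⟩
  | cons h _ ih =>
    obtain ⟨l', w', hl'⟩ := ih
    refine ⟨l' ++ [negLit _], w'.snoc h.negLit, ?_⟩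
    rw [List.map_cons, List.reverse_cons, ← hl']
    rfl

end ImplicationDigraph

universe u

def Reachability {α : Type*} (_r : α → α → Prop) : Type _ := α

instance {α : Type*} (r : α → α → Prop) : Preorder (Reachability r) where
  le := Relation.ReflTransGen r
  le_refl _ := .refl
  le_trans _ _ _ := .trans

/-- A linear extension of the condensation of `r`. -/
lemma exists_linear_rank {α : Type u} (r : α → α → Prop) :
    ∃ (β : Type u) (_ : LinearOrder β) (q : α → β),
      (∀ a b, r a b → q a ≤ q b) ∧ ∀ a b, q a = q b → Relation.ReflTransGen r a b := by
  let q : Reachability r → LinearExtension (Antisymmetrization (Reachability r) (· ≤ ·)) :=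
    fun a => toLinearExtension (toAntisymmetrization (· ≤ ·) a)
  refine ⟨_, inferInstance, q, fun a b hab => ?_, fun a b hab => ?_⟩
  · exact toLinearExtension.monotone
      (toAntisymmetrization_le_toAntisymmetrization_iff.mpr (Relation.ReflTransGen.single hab))
  · exact (Quotient.exact' hab).1

lemma exists_reach_negLit_of_not_satisfiable {n : ℕ} {φ : Finset (Lit n × Lit n)}
    (hunsat : ¬ Satisfiable2CNF φ) :
    ∃ x, Relation.ReflTransGen (implAdj φ) x (negLit x) ∧
      Relation.ReflTransGen (implAdj φ) (negLit x) x := by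
  by_contra! hcon
  obtain ⟨β, _, q, hmono, hrefl⟩ := exists_linear_rank (implAdj φ)
  refine hunsat ⟨fun i => decide (q (i, false) < q (i, true)), fun c hc => ?_⟩
  have hfalse : ∀ l : Lit n, decide (q (l.1, false) < q (l.1, true)) ≠ l.2 →
      q l ≤ q (negLit l) := by
    rintro ⟨i, _ | _⟩ hl <;> simp_all [negLit, le_of_lt]
  by_contra! hc'
  have h₁ := hfalse _ hc'.1
  have h₂ := hfalse _ hc'.2
  have hc₁ := hmono _ _ (implAdj_of_mem_left hc)
  have hc₂ := hmono _ _ (implAdj_of_mem_right hc)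
  have heq : q c.1 = q (negLit c.1) := le_antisymm h₁ (hc₁.trans (h₂.trans hc₂))
  exact hcon c.1 (hrefl _ _ heq) (hrefl _ _ heq.symm)

section ContradictoryCycle

variable {n : ℕ} {φ : Finset (Lit n × Lit n)} {x y : Lit n} {A B : List (Lit n)}

structure MinContraPair (φ : Finset (Lit n × Lit n)) (x : Lit n) (A B : List (Lit n)) :
    Prop where
  left : RelWalk (implAdj φ) x (negLit x) A
  right : RelWalk (implAdj φ) (negLit x) x B
  minimal : ∀ z l, RelWalk (implAdj φ) z z l → ∀ v ∈ l, negLit v ∈ l →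
    A.length + B.length ≤ l.length

lemma exists_minContraPair (hunsat : ¬ Satisfiable2CNF φ) : ∃ x A B, MinContraPair φ x A B := by
  classical
  have hex : ∃ L, ∃ z l, RelWalk (implAdj φ) z z l ∧ (∃ v ∈ l, negLit v ∈ l) ∧ l.length = L := by
    obtain ⟨x, h₁, h₂⟩ := exists_reach_negLit_of_not_satisfiable hunsat
    obtain ⟨A, wA⟩ := RelWalk.of_reflTransGen h₁
    obtain ⟨B, wB⟩ := RelWalk.of_reflTransGen h₂
    exact ⟨_, x, A ++ B, wA.append wB, wA.exists_contra_mem_append wB, rfl⟩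
  obtain ⟨z, l, w, ⟨v, hv, hnv⟩, hlen⟩ := Nat.find_spec hex
  obtain ⟨l', w', hperm⟩ := w.rotate hv
  obtain ⟨A, B, rfl, wA, wB⟩ := w'.split (List.mem_cons_of_mem _ (hperm.mem_iff.mpr hnv))
  refine ⟨v, A, B, wA, wB, fun z l w u hu hnu => ?_⟩
  rw [← List.length_append, hperm.length_eq, hlen]
  exact Nat.find_min' hex ⟨z, l, w, ⟨u, hu, hnu⟩, rfl⟩

namespace MinContraPair

lemma le_length_add {A' B' : List (Lit n)} (h : MinContraPair φ x A B)
    (w₁ : RelWalk (implAdj φ) y (negLit y) A') (w₂ : RelWalk (implAdj φ) (negLit y) y B') :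
    A.length + B.length ≤ A'.length + B'.length := by
  obtain ⟨v, hv, hnv⟩ := w₁.exists_contra_mem_append w₂
  simpa using h.minimal y _ (w₁.append w₂) v hv hnv

lemma nodup_left (h : MinContraPair φ x A B) : (x :: A).Nodup := by
  by_contra hnd
  obtain ⟨A', wA', hlt⟩ := h.left.exists_shorter_of_not_nodup hnd
  have := h.le_length_add wA' h.right
  omega

lemma nodup_right (h : MinContraPair φ x A B) : (negLit x :: B).Nodup := by
  by_contra hnd
  obtain ⟨B', wB', hlt⟩ := h.right.exists_shorter_of_not_nodup hnd
  have := h.le_length_add h.left wB'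
  omega

lemma nodup_append (h : MinContraPair φ x A B) (hdisj : ∀ v ∈ A, v ∉ B) : (A ++ B).Nodup :=
  List.nodup_append.mpr ⟨h.nodup_left.of_cons, h.nodup_right.of_cons,
    fun v hvA _ hvB hv => hdisj v hvA (hv ▸ hvB)⟩

end MinContraPair

/-- Rerouting `x ⇝ y ⇝ ¬x ⇝ y ⇝ x` through the contrapositives of the two halves of
`¬x ⇝ y ⇝ x` gives halves `y ⇝ ¬x ⇝ ¬y` and `¬y ⇝ x ⇝ y` of the same total length. -/
lemma MinContraPair.reroute {A₁ A₂ B₁ B₂ : List (Lit n)}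
    (h : MinContraPair φ x (A₁ ++ A₂) (B₁ ++ B₂))
    (wA₁ : RelWalk (implAdj φ) x y A₁) (wA₂ : RelWalk (implAdj φ) y (negLit x) A₂)
    (wB₁ : RelWalk (implAdj φ) (negLit x) y B₁) (wB₂ : RelWalk (implAdj φ) y x B₂) :
    ∃ N₁ N₂, MinContraPair φ y (A₂ ++ N₂) (N₁ ++ A₁) ∧
      (∀ v ∈ N₁, negLit v ∈ negLit x :: B₁) ∧ ∀ v ∈ N₂, negLit v ∈ y :: B₂ := by
  obtain ⟨N₂, wN₂, hN₂⟩ := wB₂.negLit_reverse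
  obtain ⟨N₁, wN₁, hN₁⟩ := wB₁.negLit_reverse
  rw [negLit_negLit] at wN₁
  have hlen₁ : N₁.length = B₁.length := by simpa using congrArg List.length hN₁
  have hlen₂ : N₂.length = B₂.length := by simpa using congrArg List.length hN₂
  refine ⟨N₁, N₂, ⟨wA₂.append wN₂, wN₁.append wA₁, fun z l w v hv hnv => ?_⟩,
    fun v hv => ?_, fun v hv => ?_⟩
  · have := h.minimal z l w v hv hnv
    simp only [List.length_append] at this ⊢
    omega
  · have := List.mem_cons_of_mem (negLit y) hv
    rwa [hN₁, List.mem_reverse, mem_map_negLit_iff] at this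
  · have := List.mem_cons_of_mem (negLit x) hv
    rwa [hN₂, List.mem_reverse, mem_map_negLit_iff] at this

/-- After rerouting at a shared vertex the halves are disjoint: every collision either repeats
a vertex of an old half or closes a strictly shorter walk through a complementary pair. -/
lemma MinContraPair.exists_disjoint (h : MinContraPair φ x A B) (hyA : y ∈ A) (hyB : y ∈ B) :
    ∃ A' B', MinContraPair φ y A' B' ∧ ∀ v ∈ A', v ∉ B' := by
  have hxA := h.nodup_left
  have hxB := h.nodup_right
  have hyx : y ≠ x := fun e => (List.nodup_cons.mp hxA).1 (e ▸ hyA)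
  have hynx : y ≠ negLit x := fun e => (List.nodup_cons.mp hxB).1 (e ▸ hyB)
  obtain ⟨A₁, A₂, rfl, wA₁, wA₂⟩ := h.left.split (List.mem_cons_of_mem _ hyA)
  obtain ⟨B₁, B₂, rfl, wB₁, wB₂⟩ := h.right.split (List.mem_cons_of_mem _ hyB)
  obtain ⟨N₁, N₂, h', hmem₁, hmem₂⟩ := h.reroute wA₁ wA₂ wB₁ wB₂
  refine ⟨_, _, h', fun v hvA hvB => ?_⟩
  rcases List.mem_append.mp hvA with hvA₂ | hvN₂ <;>
    rcases List.mem_append.mp hvB with hvN₁ | hvA₁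
  · have := h.minimal y _ (wA₂.append wB₁) v (List.mem_append_left _ hvA₂) <| by
      rcases List.mem_cons.mp (hmem₁ v hvN₁) with e | e
      · exact List.mem_append_left _ (e ▸ wA₂.mem_of_ne hynx)
      · exact List.mem_append_right _ e
    simp only [List.length_append] at this
    have := List.length_pos_iff.mpr (wA₁.ne_nil hyx.symm)
    have := List.length_pos_iff.mpr (wB₂.ne_nil hyx)
    omega
  · exact (List.nodup_append.mp hxA.of_cons).2.2 v hvA₁ v hvA₂ rfl
  · have hny : v ≠ negLit y := fun e => (List.nodup_cons.mp h'.nodup_right).1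
      (e ▸ List.mem_append_left _ hvN₁)
    have hB₂' : negLit v ∈ B₂ := (List.mem_cons.mp (hmem₂ v hvN₂)).resolve_left
      (fun e => hny (by rw [← e, negLit_negLit]))
    have hB₁' : negLit v ∈ B₁ := (List.mem_cons.mp (hmem₁ v hvN₁)).resolve_left
      (fun e => (List.nodup_cons.mp hxB).1 (e ▸ List.mem_append_right _ hB₂'))
    exact (List.nodup_append.mp hxB.of_cons).2.2 _ hB₁' _ hB₂' rfl
  · have := h.minimal x _ (wA₁.append wB₂) v (List.mem_append_left _ hvA₁) <| by
      rcases List.mem_cons.mp (hmem₂ v hvN₂) with e | e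
      · exact List.mem_append_left _ (e ▸ wA₁.mem_of_ne hyx.symm)
      · exact List.mem_append_right _ e
    simp only [List.length_append] at this
    have := List.length_pos_iff.mpr (wA₂.ne_nil hynx)
    have := List.length_pos_iff.mpr (wB₁.ne_nil hynx.symm)
    omega

lemma exists_simple_contra_cycle (hunsat : ¬ Satisfiable2CNF φ) :
    ∃ z l, RelWalk (implAdj φ) z z l ∧ l.Nodup ∧ ∃ y ∈ l, negLit y ∈ l := by
  obtain ⟨x, A, B, h⟩ := exists_minContraPair hunsat
  obtain ⟨x, A, B, h, hdisj⟩ : ∃ x A B, MinContraPair φ x A B ∧ ∀ v ∈ A, v ∉ B := by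
    by_cases hshare : ∃ y ∈ A, y ∈ B
    · obtain ⟨y, hyA, hyB⟩ := hshare
      exact ⟨y, h.exists_disjoint hyA hyB⟩
    · exact ⟨x, A, B, h, fun v hvA hvB => hshare ⟨v, hvA, hvB⟩⟩
  exact ⟨x, A ++ B, h.left.append h.right, h.nodup_append hdisj,
    h.left.exists_contra_mem_append h.right⟩

end ContradictoryCycle

/-- Take a longest repetition-free window: neither end can be extended, and distinct neighbours
rule out `q = 0` and `i = r - 1`. -/
lemma exists_maximal_injOn_window {β : Type*} {x : ℤ → β} {N : ℕ}
    (hadj : ∀ i, x i ≠ x (i + 1)) (hrep : ∀ p, ¬ Set.InjOn x (Set.Ico p (p + N))) :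
    ∃ (p : ℤ) (r : ℕ), 2 ≤ r ∧ r < N ∧ Set.InjOn x (Set.Ico p (p + r)) ∧
      (∃ q : ℕ, 1 ≤ q ∧ q < r ∧ x (p - 1) = x (p + q)) ∧
      (∃ i : ℕ, i + 1 < r ∧ x (p + r) = x (p + i)) := by
  classical
  let P : ℕ → Prop := fun r => ∃ p, Set.InjOn x (Set.Ico p (p + r))
  have hP2 : P 2 := ⟨0, fun a ha b hb hab => by
    simp only [Set.mem_Ico] at ha hb
    obtain rfl | rfl : a = 0 ∨ a = 1 := by omega
    all_goals obtain rfl | rfl : b = 0 ∨ b = 1 := by omega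
    all_goals first | rfl | exact absurd hab (hadj 0) | exact absurd hab.symm (hadj 0)⟩
  have hN : 2 ≤ N := by
    by_contra! hN
    obtain ⟨p, hp⟩ := hP2
    exact hrep p (hp.mono (Set.Ico_subset_Ico_right (by omega)))
  have hrP : P (Nat.findGreatest P N) := Nat.findGreatest_spec hN hP2
  have hr2 : 2 ≤ Nat.findGreatest P N := Nat.le_findGreatest hN hP2
  have hrN : Nat.findGreatest P N < N :=
    lt_of_le_of_ne (Nat.findGreatest_le N) fun h => (h ▸ hrP).elim hrep
  have hmax : ¬ P (Nat.findGreatest P N + 1) :=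
    Nat.findGreatest_is_greatest (Nat.lt_succ_self _) hrN
  set r := Nat.findGreatest P N
  obtain ⟨p, hp⟩ := hrP
  have hblocked : ∀ a, a ∉ Set.Ico p (p + r) → ¬ Set.InjOn x (insert a (Set.Ico p (p + r))) →
      ∃ j : ℕ, j < r ∧ x a = x (p + j) := by
    intro a ha hext
    rw [Set.injOn_insert ha, not_and, not_not] at hext
    obtain ⟨j, hj, hxj⟩ := hext hp
    obtain ⟨j', hj'⟩ := Int.eq_ofNat_of_zero_le (show 0 ≤ j - p by simp at hj; omega)
    exact ⟨j', by simp at hj; omega, by rw [← hxj]; congr 1; omega⟩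
  refine ⟨p, r, hr2, hrN, hp, ?_, ?_⟩
  · obtain ⟨q, hqr, hq⟩ := hblocked (p - 1) (by simp) fun h =>
      hmax ⟨p - 1, by convert h using 1; ext; simp; omega⟩
    refine ⟨q, Nat.one_le_iff_ne_zero.mpr fun hq0 => hadj (p - 1) ?_, hqr, hq⟩
    simpa [hq0] using hq
  · obtain ⟨i, hir, hi⟩ := hblocked (p + r) (by simp) fun h =>
      hmax ⟨p, by convert h using 1; ext; simp; omega⟩
    refine ⟨i, lt_of_le_of_ne hir fun hi1 => hadj (p + i) ?_, hi⟩
    rw [show p + i + 1 = p + r by omega, hi]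


section IntCast

open Fin.CommRing

variable {N : ℕ} [NeZero N]

lemma Fin.intCast_ne_intCast_of_sub_lt {i j : ℤ} (h₀ : 0 < j - i) (h₁ : j - i < N) :
    (i : Fin N) ≠ (j : Fin N) := fun he => by
  have := Int.le_of_dvd h₀ ((CharP.intCast_eq_intCast (Fin N) N).mp he).dvd
  omega

lemma Fin.exists_mem_Ico_intCast_eq (p : ℤ) (s : Fin N) :
    ∃ i ∈ Set.Ico p (p + N), (i : Fin N) = s := by
  refine ⟨p + ((s : ℤ) - p) % N, ?_, ?_⟩
  · have := Int.emod_nonneg ((s : ℤ) - p) (show (N : ℤ) ≠ 0 by simp [NeZero.ne N])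
    have := Int.emod_lt_of_pos ((s : ℤ) - p) (show (0 : ℤ) < N by simp [Nat.pos_of_neZero])
    simp only [Set.mem_Ico]
    omega
  · rw [(CharP.intCast_eq_intCast (Fin N) N).mpr ((Int.mod_modEq ((s : ℤ) - p) _).add_left p)]
    simp

lemma not_injOn_fst_Ico {n : ℕ} {w : Fin N → Lit n} (hcon : ∃ s t, w t = negLit (w s)) (p : ℤ) :
    ¬ Set.InjOn (fun i : ℤ => (w i).1) (Set.Ico p (p + N)) := by
  intro hp
  obtain ⟨s, t, hst⟩ := hcon
  obtain ⟨i, hi, rfl⟩ := Fin.exists_mem_Ico_intCast_eq p s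
  obtain ⟨j, hj, rfl⟩ := Fin.exists_mem_Ico_intCast_eq p t
  have hij : i = j := hp hi hj (by simp only [hst, negLit_fst])
  exact negLit_ne_self _ (by rw [← hst, hij])

end IntCast

open Fin.CommRing in
lemma exists_bicycle_of_contra_cycle {n : ℕ} {φ : Finset (Lit n × Lit n)}
    (hvars : ∀ c ∈ φ, c.1.1 ≠ c.2.1) {m : ℕ} {w : Fin (m + 2) → Lit n}
    (hinj : Function.Injective w) (hedge : ∀ t, implAdj φ (w t) (w (t + 1)))
    (hcon : ∃ s t : Fin (m + 2), w t = negLit (w s)) :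
    ∃ (k : ℕ) (u : Fin (k + 2) → Lit n) (α β : Fin (k + 2)),
      Function.Injective (fun t => (u t).1) ∧
      1 ≤ (α : ℕ) ∧ (β : ℕ) ≤ k ∧
      (∀ t : Fin (k + 1), (u t.castSucc, u t.succ) ∈ implEdges φ) ∧
      (negLit (u α), u 0) ∈ implEdges φ ∧
      (u (Fin.last (k + 1)), negLit (u β)) ∈ implEdges φ ∧
      (∀ t : Fin (k + 1), ∃ s : Fin (m + 2), (u t.castSucc, u t.succ) = (w s, w (s + 1))) ∧
      (∃ s : Fin (m + 2), (negLit (u α), u 0) = (w s, w (s + 1))) ∧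
      (∃ s : Fin (m + 2), (u (Fin.last (k + 1)), negLit (u β)) = (w s, w (s + 1))) := by
  let v : ℤ → Lit n := fun i => w i
  have hv_succ : ∀ i : ℤ, w ((i : Fin (m + 2)) + 1) = v (i + 1) := fun i => by simp [v]
  have hv_edge : ∀ i, implAdj φ (v i) (v (i + 1)) := fun i => hv_succ i ▸ hedge i
  have hv_on : ∀ i, ∃ s, (v i, v (i + 1)) = (w s, w (s + 1)) := fun i => ⟨i, by rw [hv_succ]⟩
  have hv_ne : ∀ i j : ℤ, 0 < j - i → j - i < m + 2 → v i ≠ v j := fun i j h₀ h₁ he =>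
    Fin.intCast_ne_intCast_of_sub_lt h₀ (by omega) (hinj he)
  obtain ⟨p, r, hr2, hrN, hp, ⟨q, hq1, hqr, hq⟩, ⟨i, hir, hi⟩⟩ :=
    exists_maximal_injOn_window (fun i => (hv_edge i).fst_ne hvars) (not_injOn_fst_Ico hcon)
  have hback : v (p - 1) = negLit (v (p + q)) :=
    eq_negLit_of_fst_eq hq (hv_ne _ _ (by omega) (by omega))
  have hfwd : v (p + r) = negLit (v (p + i)) :=
    eq_negLit_of_fst_eq hi (hv_ne _ _ (by omega) (by omega)).symm
  obtain ⟨k, rfl⟩ : ∃ k, r = k + 2 := ⟨r - 2, by omega⟩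
  have hstart : v (p + ((0 : Fin (k + 2)) : ℕ)) = v (p - 1 + 1) := by simp
  have hlast : v (p + (Fin.last (k + 1) : ℕ)) = v (p + (k + 1 : ℕ)) := by simp
  have hnext : v (p + (k + 2 : ℕ)) = v (p + (k + 1 : ℕ) + 1) := by push_cast; ring_nf
  have hsucc : ∀ t : Fin (k + 1),
      v (p + (t.succ : ℕ)) = v (p + (t.castSucc : ℕ) + 1) := fun t => by simp [add_assoc]
  refine ⟨k, fun t => v (p + (t : ℕ)), ⟨q, by omega⟩, ⟨i, by omega⟩,
    fun t₁ t₂ h => Fin.ext (by simpa using hp (by simp; omega) (by simp; omega) h),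
    hq1, by simp; omega, fun t => ?_, ?_, ?_, fun t => ?_, ?_, ?_⟩
  · show implAdj φ (v _) (v _)
    exact hsucc t ▸ hv_edge _
  · show implAdj φ _ _
    simpa only [hstart, ← hback] using hv_edge (p - 1)
  · show implAdj φ _ _
    simpa only [hlast, ← hfwd, hnext] using hv_edge (p + (k + 1 : ℕ))
  · show ∃ s, (v _, v _) = _
    exact hsucc t ▸ hv_on _
  · simpa only [hstart, ← hback] using hv_on (p - 1)
  · simpa only [hlast, ← hfwd, hnext] using hv_on (p + (k + 1 : ℕ))

/-- The implication digraph of an unsatisfiable 2-CNF formula contains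
a basis of a `(k,a,b)`-bicycle all of whose edges (together with the two extra edges)
are edges of a single contradictory directed cycle.

Here a cycle is given by an injective map `w : Fin (m+2) → Lit n` together with all
cyclically consecutive edges; it is contradictory if it contains a pair of complementary
literals.  The basis of the bicycle is `u : Fin (k+2) → Lit n` (so its length is at
least `2`), and `α`, `β` are the 0-based indices of the literals `u_a`, `u_b`;
the 1-based constraints `2 ≤ a ≤ k` and `1 ≤ b ≤ k−1` become `1 ≤ α` and `β ≤ k`. -/
theorem bicycle_of_unsatisfiable
    {n : ℕ} (φ : Finset (Lit n × Lit n))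
    (hvars : ∀ c ∈ φ, c.1.1 ≠ c.2.1)
    (hunsat : ¬ Satisfiable2CNF φ) :
    ∃ (m : ℕ) (w : Fin (m + 2) → Lit n),
      -- `w` is a contradictory directed cycle of the implication digraph
      Function.Injective w ∧
      (∀ t : Fin (m + 2), (w t, w (t + 1)) ∈ implEdges φ) ∧
      (∃ s t : Fin (m + 2), w t = negLit (w s)) ∧
      -- a basis of a `(k,a,b)`-bicycle whose edges all lie on the cycle `w`
      ∃ (k : ℕ) (u : Fin (k + 2) → Lit n) (α β : Fin (k + 2)),
        Function.Injective (fun t => (u t).1) ∧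
        1 ≤ (α : ℕ) ∧ (β : ℕ) ≤ k ∧
        (∀ t : Fin (k + 1), (u t.castSucc, u t.succ) ∈ implEdges φ) ∧
        (negLit (u α), u 0) ∈ implEdges φ ∧
        (u (Fin.last (k + 1)), negLit (u β)) ∈ implEdges φ ∧
        (∀ t : Fin (k + 1), ∃ s : Fin (m + 2), (u t.castSucc, u t.succ) = (w s, w (s + 1))) ∧
        (∃ s : Fin (m + 2), (negLit (u α), u 0) = (w s, w (s + 1))) ∧
        (∃ s : Fin (m + 2), (u (Fin.last (k + 1)), negLit (u β)) = (w s, w (s + 1))) := by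
  obtain ⟨z, l, hwalk, hnodup, y, hy, hny⟩ := exists_simple_contra_cycle hunsat
  have hlen : 2 ≤ l.length := by
    by_contra! hlen
    have := List.length_pos_of_mem hy
    obtain ⟨a, rfl⟩ := List.length_eq_one_iff.mp (show l.length = 1 by omega)
    rw [List.mem_singleton] at hy hny
    exact negLit_ne_self y (hny.trans hy.symm)
  obtain ⟨m, hm⟩ : ∃ m, l.length = m + 2 := ⟨l.length - 2, by omega⟩
  obtain ⟨w, hinj, hedge, hmem⟩ := hwalk.exists_fin_cycle hnodup hm
  have hcon : ∃ s t, w t = negLit (w s) := by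
    obtain ⟨s, hs⟩ := hmem y hy
    obtain ⟨t, ht⟩ := hmem _ hny
    exact ⟨s, t, hs ▸ ht⟩
  exact ⟨m, w, hinj, hedge, hcon, exists_bicycle_of_contra_cycle hvars hinj hedge hcon⟩
end
end

section
/- Let W be a graphon (nonnegative, symmetric, essentially bounded measurable function) on K = Λ×{+,−} and let n ∈ ℕ. Let F ⊆ Lit_n × Lit_n be a set of ordered pairs of literals such that for every pair of literals (l_1, l_2) on different variables, |F ∩ {(l_1,l_2), (¬l_2,¬l_1)}| ≤ 1. Then the random edge sets G(n,→W) ∩ F and ImplDig(TwoSAT†(n,W)) ∩ F have the same distribution; that is, for every F' ⊆ F, P[G(n,→W) ∩ F = F'] = P[ImplDig(TwoSAT†(n,W)) ∩ F = F']. -/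
open MeasureTheory ENNReal Filter Topology

noncomputable section

/-- The map `τ` sending a literal to its type in `K`: `τ(v_i) = x_i`, `τ(¬v_i) = ¬x_i`. -/
def tauMap {Λ : Type*} {n : ℕ} (x : Fin n → Λ × Bool) (l : Lit n) : Λ × Bool :=
  if l.2 then x l.1 else negK (x l.1)

/-- Clause inclusion probability in the model `TwoSAT†(n, W)` given the sample `x`. -/
def clausePd {Λ : Type*} (W : (Λ × Bool) × (Λ × Bool) → ℝ) (n : ℕ)
    (x : Fin n → Λ × Bool) (c : Slot n) : ℝ :=
  min 1 (W (tauMap x (c.1, c.2.2.1), tauMap x (c.2.1, c.2.2.2)) / (2 * n))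

/-- All possible directed edges between literals on different variables. -/
def edgeSlots (n : ℕ) : Finset (Lit n × Lit n) :=
  Finset.univ.filter (fun e => e.1.1 ≠ e.2.1)

/-- Edge inclusion probability in the random digraph `𝔾(n, U)` given the sample `x`. -/
def edgeP {Λ : Type*} (U : (Λ × Bool) × (Λ × Bool) → ℝ) (n : ℕ)
    (x : Fin n → Λ × Bool) (e : Lit n × Lit n) : ℝ :=
  min 1 (U (tauMap x e.1, tauMap x e.2) / (2 * n))

/-- The implication digraph of a formula (given as a set of clause slots). -/
def implDigFinset {n : ℕ} (G : Finset (Slot n)) : Finset (Lit n × Lit n) :=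
  G.image (fun c => (negLit (c.1, c.2.2.1), (c.2.1, c.2.2.2))) ∪
    G.image (fun c => (negLit (c.2.1, c.2.2.2), (c.1, c.2.2.1)))

/-- `P[𝔾(n,U) ∩ F = F']` for the random digraph `𝔾(n, U)`. -/
def digraphRestrictionProb {Λ : Type*} [MeasurableSpace Λ] (lam : Measure Λ)
    (U : (Λ × Bool) × (Λ × Bool) → ℝ) (n : ℕ) (F F' : Finset (Lit n × Lit n)) : ℝ :=
  ∫ x : Fin n → Λ × Bool, ∑ H ∈ (edgeSlots n).powerset,
      (if H ∩ F = F' then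
        (∏ e ∈ H, edgeP U n x e) * ∏ e ∈ edgeSlots n \ H, (1 - edgeP U n x e)
      else 0)
    ∂(Measure.pi fun _ => kappa lam)

/-- `P[ImplDig(TwoSAT†(n,W)) ∩ F = F']` for the random formula `TwoSAT†(n, W)`. -/
def implRestrictionProb {Λ : Type*} [MeasurableSpace Λ] (lam : Measure Λ)
    (W : (Λ × Bool) × (Λ × Bool) → ℝ) (n : ℕ) (F F' : Finset (Lit n × Lit n)) : ℝ :=
  ∫ x : Fin n → Λ × Bool, ∑ G ∈ (slots n).powerset,
      (if implDigFinset G ∩ F = F' then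
        (∏ c ∈ G, clausePd W n x c) * ∏ c ∈ slots n \ G, (1 - clausePd W n x c)
      else 0)
    ∂(Measure.pi fun _ => kappa lam)

/-!
Conditionally on the sampled types `x`, both models consist of independent Bernoulli choices:
`𝔾(n, →W)` over directed edges, `TwoSAT†(n, W)` over clauses. The edge `(l₁, l₂)` lies in
`ImplDig(φ)` exactly when the clause `{¬l₁, l₂}` lies in `φ`, and by symmetry of `W` both events
have probability `min 1 (W(τ(¬l₁), τ(l₂)) / 2n)`. The hypothesis on `F` makes distinct edges of
`F` come from distinct clauses, so in both models the edges of `F` are independent with the same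
marginals, and the integrands defining the two probabilities agree for every `x`.
-/

namespace Finset

variable {α β R : Type*} [DecidableEq α] [DecidableEq β] [CommRing R]

theorem sum_powerset_ite_inter_eq {S F F' : Finset α} (hFS : F ⊆ S) (hF' : F' ⊆ F)
    (p : α → R) :
    ∑ H ∈ S.powerset,
        (if H ∩ F = F' then (∏ a ∈ H, p a) * ∏ a ∈ S \ H, (1 - p a) else 0) =
      (∏ a ∈ F', p a) * ∏ a ∈ F \ F', (1 - p a) := by
  -- `f` and `g` vanish on the choices excluded by `H ∩ F = F'`, so that `prod_add` applies.
  set f : α → R := fun a => if a ∈ F \ F' then 0 else p a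
  set g : α → R := fun a => if a ∈ F' then 0 else 1 - p a
  have hterm : ∀ H ∈ S.powerset,
      (if H ∩ F = F' then (∏ a ∈ H, p a) * ∏ a ∈ S \ H, (1 - p a) else 0) =
        (∏ a ∈ H, f a) * ∏ a ∈ S \ H, g a := by
    intro H hH
    split_ifs with hHF
    · subst hHF
      congr 1 <;> refine prod_congr rfl fun a ha => ?_ <;> simp_all [f, g]
    · obtain ⟨a, ha⟩ : ∃ a, ¬(a ∈ H ∧ a ∈ F ↔ a ∈ F') := by
        simpa [Finset.ext_iff] using hHF
      by_cases haH : a ∈ H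
      · have hfa : f a = 0 := if_pos (by grind)
        rw [prod_eq_zero haH hfa, zero_mul]
      · have hga : g a = 0 := if_pos (by grind)
        have haS : a ∈ S \ H := by grind
        rw [prod_eq_zero haS hga, mul_zero]
  have hfactor : ∀ a ∈ S, f a + g a =
      if a ∈ F' then p a else if a ∈ F then 1 - p a else 1 := by
    intro a _
    by_cases ha' : a ∈ F' <;> by_cases ha : a ∈ F <;> simp [f, g, ha, ha']
  rw [sum_congr rfl hterm, ← prod_add, prod_congr rfl hfactor, prod_ite, prod_ite_mem,
    filter_mem_eq_inter, filter_not, filter_mem_eq_inter, inter_eq_right.2 (hF'.trans hFS)]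
  congr 2
  grind

theorem sum_powerset_ite_filter_eq {S : Finset α} {F F' : Finset β} {c : β → α}
    (hc : Set.InjOn c F) (hcS : ∀ e ∈ F, c e ∈ S) (hF' : F' ⊆ F) (p : α → R) :
    ∑ H ∈ S.powerset, (if F.filter (fun e => c e ∈ H) = F' then
        (∏ a ∈ H, p a) * ∏ a ∈ S \ H, (1 - p a) else 0) =
      (∏ e ∈ F', p (c e)) * ∏ e ∈ F \ F', (1 - p (c e)) := by
  have hcond : ∀ H : Finset α,
      F.filter (fun e => c e ∈ H) = F' ↔ H ∩ F.image c = F'.image c := by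
    intro H
    rw [inter_comm, ← filter_mem_eq_inter, filter_image, ← coe_inj, ← coe_inj (s₁ := image _ _),
      coe_image, coe_image, hc.image_eq_image_iff (filter_subset _ _) hF']
  rw [sum_congr rfl fun H _ => if_congr (hcond H) rfl rfl,
    sum_powerset_ite_inter_eq (image_subset_iff.2 hcS) (image_subset_image hF'),
    ← image_sdiff_of_injOn hc hF', prod_image (hc.mono hF'), prod_image (hc.mono sdiff_subset)]

end Finset

open Finset

/-- `(l₁, l₂)` is an implication edge of the clause `{¬l₁, l₂}`; this is its slot. -/
def edgeClause {n : ℕ} (e : Lit n × Lit n) : Slot n :=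
  if e.1.1 < e.2.1 then (e.1.1, e.2.1, !e.1.2, e.2.2) else (e.2.1, e.1.1, e.2.2, !e.1.2)

theorem tauMap_negLit {Λ : Type*} {n : ℕ} (x : Fin n → Λ × Bool) (l : Lit n) :
    tauMap x (negLit l) = negK (tauMap x l) := by
  rcases l with ⟨i, _ | _⟩ <;> simp [tauMap, negLit, negK]

theorem clausePd_edgeClause {Λ : Type*} {W : (Λ × Bool) × (Λ × Bool) → ℝ}
    (hW : ∀ z w, W (z, w) = W (w, z)) {n : ℕ} (x : Fin n → Λ × Bool) (e : Lit n × Lit n) :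
    clausePd W n x (edgeClause e) = edgeP (implKer W) n x e := by
  unfold clausePd edgeP edgeClause implKer
  split_ifs
  · rw [← tauMap_negLit]; rfl
  · rw [hW, ← tauMap_negLit]; rfl

theorem edgeClause_mem_slots {n : ℕ} {e : Lit n × Lit n} (he : e.1.1 ≠ e.2.1) :
    edgeClause e ∈ slots n := by
  unfold edgeClause slots
  split_ifs with h
  · simpa using h
  · simpa using lt_of_le_of_ne (not_lt.1 h) he.symm

theorem mem_implDigFinset_iff {n : ℕ} {G : Finset (Slot n)} (hG : G ⊆ slots n)
    {e : Lit n × Lit n} (he : e.1.1 ≠ e.2.1) :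
    e ∈ implDigFinset G ↔ edgeClause e ∈ G := by
  simp only [implDigFinset, mem_union, mem_image]
  constructor
  · rintro (⟨c, hc, rfl⟩ | ⟨c, hc, rfl⟩) <;> have hlt := (mem_filter.1 (hG hc)).2
    · convert hc using 1; simp [edgeClause, negLit, hlt]
    · convert hc using 1; simp [edgeClause, negLit, hlt.not_gt]
  · intro h
    rcases he.lt_or_gt with hlt | hlt
    · exact Or.inl ⟨_, h, by simp [edgeClause, negLit, hlt]⟩
    · exact Or.inr ⟨_, h, by simp [edgeClause, negLit, hlt.not_gt]⟩

theorem edgeClause_injOn {n : ℕ} {F : Finset (Lit n × Lit n)}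
    (hF : ∀ l1 l2 : Lit n, l1.1 ≠ l2.1 → ¬((l1, l2) ∈ F ∧ (negLit l2, negLit l1) ∈ F)) :
    Set.InjOn edgeClause (F : Set (Lit n × Lit n)) := by
  rintro ⟨⟨i, a⟩, ⟨j, b⟩⟩ he ⟨⟨i', a'⟩, ⟨j', b'⟩⟩ he' heq
  simp only [edgeClause] at heq
  split_ifs at heq with h h' h' <;> simp only [Prod.mk.injEq] at heq
  · obtain ⟨rfl, rfl, ha, rfl⟩ := heq
    rw [Bool.not_inj ha]
  · obtain ⟨rfl, rfl, rfl, rfl⟩ := heq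
    exact absurd ⟨he, by simpa [negLit] using he'⟩ (hF _ _ h.ne)
  · obtain ⟨rfl, rfl, rfl, rfl⟩ := heq
    exact absurd ⟨he', by simpa [negLit] using he⟩ (hF _ _ h'.ne)
  · obtain ⟨rfl, rfl, rfl, ha⟩ := heq
    rw [Bool.not_inj ha]

theorem implDigFinset_inter_eq_filter {n : ℕ} {G : Finset (Slot n)} (hG : G ⊆ slots n)
    {F : Finset (Lit n × Lit n)} (hF : ∀ e ∈ F, e.1.1 ≠ e.2.1) :
    implDigFinset G ∩ F = F.filter (fun e => edgeClause e ∈ G) := by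
  rw [inter_comm, ← filter_mem_eq_inter]
  exact filter_congr fun e he => mem_implDigFinset_iff hG (hF e he)

theorem marginals_same_general
    {Λ : Type*} [MeasurableSpace Λ]
    (lam : Measure Λ)
    (W : (Λ × Bool) × (Λ × Bool) → ℝ)
    (hWsymm : ∀ z w, W (z, w) = W (w, z))
    (n : ℕ) (F : Finset (Lit n × Lit n))
    (hFvar : ∀ e ∈ F, e.1.1 ≠ e.2.1)
    (hF : ∀ l1 l2 : Lit n, l1.1 ≠ l2.1 →
      ¬ ((l1, l2) ∈ F ∧ (negLit l2, negLit l1) ∈ F)) :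
    ∀ F' ⊆ F,
      digraphRestrictionProb lam (implKer W) n F F' = implRestrictionProb lam W n F F' := by
  intro F' hF'
  unfold digraphRestrictionProb implRestrictionProb
  congr 1 with x
  have hFedges : F ⊆ edgeSlots n := fun e he => mem_filter.2 ⟨mem_univ e, hFvar e he⟩
  simp only [sum_powerset_ite_inter_eq hFedges hF', ← clausePd_edgeClause hWsymm x]
  rw [← sum_powerset_ite_filter_eq (edgeClause_injOn hF)
    (fun e he => edgeClause_mem_slots (hFvar e he)) hF']
  refine sum_congr rfl fun G hG => ?_
  rw [implDigFinset_inter_eq_filter (mem_powerset.1 hG) hFvar]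

/-- If `F` contains at most one edge from each pair of equivalent
directed edges `{(l₁,l₂), (¬l₂,¬l₁)}`, then `𝔾(n, →W) ∩ F` and
`ImplDig(TwoSAT†(n, W)) ∩ F` have the same distribution. -/
theorem marginals_same
    {Λ : Type*} [MeasurableSpace Λ] [TopologicalSpace Λ] [PolishSpace Λ] [BorelSpace Λ]
    (lam : Measure Λ) [IsProbabilityMeasure lam]
    (W : (Λ × Bool) × (Λ × Bool) → ℝ)
    (hWmeas : Measurable W)
    (hWnonneg : ∀ z, 0 ≤ W z)
    (hWsymm : ∀ z w, W (z, w) = W (w, z))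
    (hWbdd : MemLp W ⊤ ((kappa lam).prod (kappa lam)))
    (n : ℕ) (F : Finset (Lit n × Lit n))
    (hFvar : ∀ e ∈ F, e.1.1 ≠ e.2.1)
    (hF : ∀ l1 l2 : Lit n, l1.1 ≠ l2.1 →
      ¬ ((l1, l2) ∈ F ∧ (negLit l2, negLit l1) ∈ F)) :
    ∀ F' ⊆ F,
      digraphRestrictionProb lam (implKer W) n F F' = implRestrictionProb lam W n F F' :=
  marginals_same_general lam W hWsymm n F hFvar hF
end
end

section
/- Let (Ω,μ) be a probability space, let 1 ≤ q ≤ p < ∞, and let Γ be a nonnegative measurable kernel on Ω² such that the integral kernel operator T_Γ, (T_Γ f)(x) = ∫ f(y) Γ(y,x) dμ(y), is a compact operator both on L^q(Ω) and on L^p(Ω). Then the spectral radii agree: ρ_p(Γ) = ρ_q(Γ). -/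
/-!
A compact operator of nonzero spectral radius has an eigenvalue of maximal modulus (Fredholm
alternative), and an injective operator intertwining two operators carries eigenvalues of the
first to eigenvalues of the second. The inclusion `L^p ↪ L^q` intertwines `T_p` with `T_q`,
giving `ρ_p ≤ ρ_q`. Its Banach adjoint `(L^q)* → (L^p)*` is injective because `L^p` is dense in
`L^q`, and it intertwines the adjoints; since the adjoint of a compact operator is compact
(Schauder) and has the same spectral radius, this gives `ρ_q ≤ ρ_p`.
-/

open MeasureTheory ENNReal Metric Module End

theorem TotallyBounded.image_of_dist_le {α β γ : Type*} [PseudoMetricSpace β]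
    [PseudoMetricSpace γ] {f : α → β} {g : α → γ} {s : Set α} (hg : TotallyBounded (g '' s))
    (hfg : ∀ a ∈ s, ∀ b ∈ s, dist (f a) (f b) ≤ dist (g a) (g b)) : TotallyBounded (f '' s) := by
  refine totallyBounded_iff.mpr fun ε hε => ?_
  obtain ⟨t, hts, htfin, hcover⟩ := finite_approx_of_totallyBounded hg ε hε
  choose a has hga using fun y : t => hts y.2
  have := htfin.to_subtype
  refine ⟨Set.range (f ∘ a), Set.finite_range _, ?_⟩
  rintro _ ⟨b, hb, rfl⟩
  obtain ⟨y, hy, hby⟩ := Set.mem_iUnion₂.mp (hcover ⟨b, hb, rfl⟩)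
  refine Set.mem_iUnion₂.mpr ⟨f (a ⟨y, hy⟩), ⟨_, rfl⟩, ?_⟩
  calc dist (f b) (f (a ⟨y, hy⟩)) ≤ dist (g b) (g (a ⟨y, hy⟩)) := hfg _ hb _ (has _)
    _ < ε := by rwa [hga]

theorem Module.End.HasEigenvalue.of_comp_eq {R M N : Type*} [CommRing R] [AddCommGroup M]
    [Module R M] [AddCommGroup N] [Module R N] {f : End R M} {g : End R N} {J : M →ₗ[R] N}
    (hJ : Function.Injective J) (hJfg : J ∘ₗ f = g ∘ₗ J) {μ : R} (hμ : f.HasEigenvalue μ) :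
    g.HasEigenvalue μ := by
  obtain ⟨x, hx⟩ := hμ.exists_hasEigenvector
  refine hasEigenvalue_of_hasEigenvector (x := J x) ⟨?_, (map_ne_zero_iff J hJ).mpr hx.2⟩
  rw [mem_eigenspace_iff]
  calc g (J x) = J (f x) := congr($hJfg x).symm
    _ = μ • J x := by rw [hx.apply_eq_smul, map_smul]

namespace IsCompactOperator

variable {E : Type*} [NormedAddCommGroup E] [NormedSpace ℂ E] [CompleteSpace E]

theorem exists_hasEigenvalue_nnnorm_eq_spectralRadius {T : E →L[ℂ] E}
    (hT : IsCompactOperator T) (hρ : spectralRadius ℂ T ≠ 0) :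
    ∃ μ, HasEigenvalue (T : End ℂ E) μ ∧ (‖μ‖₊ : ℝ≥0∞) = spectralRadius ℂ T := by
  have : Nontrivial (E →L[ℂ] E) := by
    by_contra h
    rw [not_nontrivial_iff_subsingleton] at h
    simp [spectralRadius, spectrum.of_subsingleton] at hρ
  obtain ⟨μ, hμσ, hμρ⟩ := spectrum.exists_nnnorm_eq_spectralRadius T
  have hμ : μ ≠ 0 := by rintro rfl; simp [← hμρ] at hρ
  exact ⟨μ, (hT.hasEigenvalue_iff_mem_spectrum hμ).mpr hμσ, hμρ⟩

theorem spectralRadius_le_of_comp_eq {F : Type*} [NormedAddCommGroup F] [NormedSpace ℂ F]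
    [CompleteSpace F] {T : E →L[ℂ] E} (hT : IsCompactOperator T) {S : F →L[ℂ] F}
    {J : E →L[ℂ] F} (hJ : Function.Injective J) (hJTS : J ∘L T = S ∘L J) :
    spectralRadius ℂ T ≤ spectralRadius ℂ S := by
  rcases eq_or_ne (spectralRadius ℂ T) 0 with h0 | h0
  · simp [h0]
  obtain ⟨μ, hμ, hμρ⟩ := hT.exists_hasEigenvalue_nnnorm_eq_spectralRadius h0
  have hJTS' : (J : E →ₗ[ℂ] F) ∘ₗ (T : End ℂ E) = (S : End ℂ F) ∘ₗ J :=
    LinearMap.ext fun x => congr($hJTS x)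
  have hSμ : HasEigenvalue (S : End ℂ F) μ := hμ.of_comp_eq hJ hJTS'
  rw [← hμρ]
  refine le_iSup₂ (f := fun k (_ : k ∈ spectrum ℂ S) => (‖k‖₊ : ℝ≥0∞)) μ ?_
  rw [ContinuousLinearMap.spectrum_eq]
  exact hSμ.mem_spectrum

end IsCompactOperator

namespace ContinuousLinearMap

variable {𝕜 E F : Type*} [RCLike 𝕜] [NormedAddCommGroup E] [NormedSpace 𝕜 E]
  [NormedAddCommGroup F] [NormedSpace 𝕜 F]

noncomputable def dualMap (T : E →L[𝕜] F) : StrongDual 𝕜 F →L[𝕜] StrongDual 𝕜 E :=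
  (compL 𝕜 E F 𝕜).flip T

@[simp]
theorem dualMap_apply (T : E →L[𝕜] F) (φ : StrongDual 𝕜 F) : T.dualMap φ = φ ∘L T := rfl

theorem dualMap_comp {G : Type*} [NormedAddCommGroup G] [NormedSpace 𝕜 G] (S : F →L[𝕜] G)
    (T : E →L[𝕜] F) : (S ∘L T).dualMap = T.dualMap ∘L S.dualMap := rfl

theorem dualMap_pow (T : E →L[𝕜] E) (n : ℕ) : (T ^ n).dualMap = T.dualMap ^ n := by
  induction n with
  | zero => rfl
  | succ n ih => rw [pow_succ, mul_def, dualMap_comp, ih, pow_succ', mul_def]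

theorem dualMap_injective_of_denseRange {T : E →L[𝕜] F} (hT : DenseRange T) :
    Function.Injective T.dualMap :=
  fun φ ψ h => ext <| congrFun (hT.equalizer φ.continuous ψ.continuous congr(⇑$h))

theorem opNorm_dualMap (T : E →L[𝕜] F) : ‖T.dualMap‖ = ‖T‖ := by
  refine le_antisymm (opNorm_le_bound T.dualMap (norm_nonneg T) fun φ => ?_)
    (opNorm_le_bound T (norm_nonneg T.dualMap) fun x => ?_)
  · rw [dualMap_apply, mul_comm]
    exact opNorm_comp_le φ T
  · refine NormedSpace.norm_le_dual_bound 𝕜 _ (by positivity) fun φ => ?_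
    calc ‖φ (T x)‖ = ‖T.dualMap φ x‖ := rfl
      _ ≤ ‖T.dualMap‖ * ‖φ‖ * ‖x‖ := (T.dualMap φ).le_of_opNorm_le (T.dualMap.le_opNorm φ) x
      _ = ‖T.dualMap‖ * ‖x‖ * ‖φ‖ := by ring

theorem spectralRadius_dualMap {E : Type*} [NormedAddCommGroup E] [NormedSpace ℂ E]
    [CompleteSpace E] (T : E →L[ℂ] E) : spectralRadius ℂ T.dualMap = spectralRadius ℂ T := by
  refine tendsto_nhds_unique ?_ (spectrum.pow_nnnorm_pow_one_div_tendsto_nhds_spectralRadius T)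
  simpa only [← dualMap_pow, nnnorm, opNorm_dualMap] using
    spectrum.pow_nnnorm_pow_one_div_tendsto_nhds_spectralRadius T.dualMap

end ContinuousLinearMap

open ContinuousLinearMap BoundedContinuousFunction in
theorem IsCompactOperator.dualMap {𝕜 E F : Type*} [RCLike 𝕜] [NormedAddCommGroup E]
    [NormedSpace 𝕜 E] [NormedAddCommGroup F] [NormedSpace 𝕜 F] {T : E →L[𝕜] F}
    (hT : IsCompactOperator T) : IsCompactOperator T.dualMap := by
  obtain ⟨K, hK, hTK⟩ := hT.image_closedBall_subset_compact 1
  have := isCompact_iff_compactSpace.mp hK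
  obtain ⟨R, hR⟩ := hK.isBounded.subset_closedBall 0
  let restrict (φ : StrongDual 𝕜 F) : K →ᵇ 𝕜 :=
    mkOfCompact ⟨fun y => φ y, φ.continuous.comp continuous_subtype_val⟩
  -- `‖φ ∘ T‖` is the sup of `|φ|` over `T (closedBall 0 1) ⊆ K`.
  have hdist (φ ψ : StrongDual 𝕜 F) :
      dist (T.dualMap φ) (T.dualMap ψ) ≤ dist (restrict φ) (restrict ψ) := by
    rw [dist_eq_norm, ← map_sub]
    refine opNorm_le_of_unit_norm dist_nonneg fun x hx => ?_
    have hTx : T x ∈ K := hTK ⟨x, by simp [hx], rfl⟩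
    exact (dist_eq_norm _ _).symm.trans_le
      (dist_coe_le_dist (f := restrict φ) (g := restrict ψ) ⟨T x, hTx⟩)
  -- Arzelà–Ascoli: the restrictions of the unit ball are uniformly bounded and 1-Lipschitz.
  have hball : TotallyBounded (restrict '' closedBall 0 1) := by
    refine (arzela_ascoli (closedBall (0 : 𝕜) R) (isCompact_closedBall 0 R) _ ?_ ?_)
      |>.totallyBounded.subset subset_closure
    · rintro _ y ⟨φ, hφ, rfl⟩
      rw [mem_closedBall_zero_iff] at hφ ⊢
      calc ‖φ y‖ ≤ ‖φ‖ * ‖(y : F)‖ := φ.le_opNorm y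
        _ ≤ 1 * R :=
          mul_le_mul hφ (mem_closedBall_zero_iff.mp (hR y.2)) (norm_nonneg _) zero_le_one
        _ = R := one_mul R
    · refine (LipschitzWith.uniformEquicontinuous _ 1 ?_).equicontinuous
      rintro ⟨_, φ, hφ, rfl⟩
      refine (φ.lipschitz.comp (LipschitzWith.subtype_val K)).weaken ?_
      simpa [← NNReal.coe_le_coe] using hφ
  refine (isCompactOperator_iff_image_closedBall_subset_compact _ one_pos).mpr
    ⟨_, ?_, subset_closure⟩
  exact (hball.image_of_dist_le fun φ _ ψ _ => hdist φ ψ).closure.isCompact_of_isClosed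
    isClosed_closure

namespace MeasureTheory.Lp

variable {α 𝕜 E : Type*} [MeasurableSpace α] {μ : Measure α} [IsFiniteMeasure μ]
  [NormedField 𝕜] [NormedAddCommGroup E] [NormedSpace 𝕜 E]
  {p q : ℝ≥0∞} [Fact (1 ≤ p)] [Fact (1 ≤ q)]

variable (𝕜 E μ) in
/-- Both `L^p` and `L^q` are subgroups of `α →ₘ[μ] E`, so the inclusion is the identity on
a.e.-classes. -/
noncomputable def inclusion (hqp : q ≤ p) : Lp E p μ →L[𝕜] Lp E q μ :=
  LinearMap.mkContinuous
    { toFun f := ⟨f, mem_Lp_iff_memLp.mpr ((Lp.memLp f).mono_exponent hqp)⟩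
      map_add' _ _ := rfl
      map_smul' _ _ := rfl }
    (μ Set.univ ^ (1 / q.toReal - 1 / p.toReal)).toReal
    fun f => by
      have hexp : 0 ≤ 1 / q.toReal - 1 / p.toReal := by
        rcases eq_or_ne p ∞ with rfl | hp
        · simp
        have hq : 0 < q.toReal :=
          toReal_pos (zero_lt_one.trans_le Fact.out).ne' (ne_top_of_le_ne_top hp hqp)
        exact sub_nonneg.mpr (one_div_le_one_div_of_le hq (toReal_mono hp hqp))
      rw [norm_def, norm_def, ← toReal_mul, mul_comm]
      exact toReal_mono
        (mul_ne_top (Lp.memLp f).2.ne (rpow_ne_top_of_nonneg hexp (measure_ne_top μ _)))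
        (eLpNorm_le_eLpNorm_mul_rpow_measure_univ hqp (Lp.aestronglyMeasurable f))

theorem coeFn_inclusion (hqp : q ≤ p) (f : Lp E p μ) :
    (inclusion 𝕜 E μ hqp f : α → E) = f := rfl

theorem inclusion_injective (hqp : q ≤ p) : Function.Injective (inclusion 𝕜 E μ hqp) :=
  fun _ _ h => Subtype.ext congr(($h : α →ₘ[μ] E))

theorem denseRange_inclusion (hqp : q ≤ p) (hq : q ≠ ∞) :
    DenseRange (inclusion 𝕜 E μ hqp) := by
  refine (simpleFunc.denseRange hq).mono ?_
  rintro _ ⟨g, rfl⟩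
  have hg : MemLp (simpleFunc.toSimpleFunc g) p μ :=
    (simpleFunc.toSimpleFunc g).memLp_of_isFiniteMeasure p μ
  exact ⟨⟨g, mem_Lp_iff_memLp.mpr (hg.ae_eq (simpleFunc.toSimpleFunc_eq_toFun g))⟩, rfl⟩

end MeasureTheory.Lp

theorem spectralRadius_eq_of_compact_general
    {Ω : Type*} [MeasurableSpace Ω] (μ : Measure Ω) [IsProbabilityMeasure μ]
    (q p : ℝ≥0∞) [Fact (1 ≤ q)] [Fact (1 ≤ p)] (hqp : q ≤ p) (hp : p ≠ ∞)
    (Γ : Ω × Ω → ℝ)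
    (Tq : Lp ℂ q μ →L[ℂ] Lp ℂ q μ) (Tp : Lp ℂ p μ →L[ℂ] Lp ℂ p μ)
    (hTq : ∀ f : Lp ℂ q μ, ∀ᵐ x ∂μ, Tq f x = ∫ y, f y * (Γ (y, x) : ℂ) ∂μ)
    (hTp : ∀ f : Lp ℂ p μ, ∀ᵐ x ∂μ, Tp f x = ∫ y, f y * (Γ (y, x) : ℂ) ∂μ)
    (hKq : IsCompactOperator Tq) (hKp : IsCompactOperator Tp) :
    spectralRadius ℂ Tp = spectralRadius ℂ Tq := by
  let ι := Lp.inclusion ℂ ℂ μ hqp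
  have hcomm : ι ∘L Tp = Tq ∘L ι := by
    ext1 f
    refine Lp.ext ?_
    filter_upwards [hTq (ι f), hTp f] with x hTqx hTpx
    rw [ContinuousLinearMap.comp_apply, ContinuousLinearMap.comp_apply, Lp.coeFn_inclusion,
      hTpx, hTqx]
    rfl
  have hι_dense : DenseRange ι := Lp.denseRange_inclusion hqp (ne_top_of_le_ne_top hp hqp)
  apply le_antisymm
  · exact hKp.spectralRadius_le_of_comp_eq (Lp.inclusion_injective hqp) hcomm
  · calc spectralRadius ℂ Tq = spectralRadius ℂ Tq.dualMap :=
          (ContinuousLinearMap.spectralRadius_dualMap Tq).symm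
      _ ≤ spectralRadius ℂ Tp.dualMap :=
        hKq.dualMap.spectralRadius_le_of_comp_eq
          (ContinuousLinearMap.dualMap_injective_of_denseRange hι_dense)
          (by rw [← ContinuousLinearMap.dualMap_comp, ← ContinuousLinearMap.dualMap_comp, hcomm])
      _ = spectralRadius ℂ Tp := ContinuousLinearMap.spectralRadius_dualMap Tp

/-- If the integral kernel operator of a nonnegative kernel `Γ` is a
compact operator both on `L^q(Ω)` and on `L^p(Ω)` for `1 ≤ q ≤ p < ∞`, then the two
spectral radii agree. -/
theorem spectralRadius_eq_of_compact
    {Ω : Type*} [MeasurableSpace Ω] (μ : Measure Ω) [IsProbabilityMeasure μ]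
    (q p : ℝ≥0∞) [Fact (1 ≤ q)] [Fact (1 ≤ p)] (hqp : q ≤ p) (hp : p ≠ ∞)
    (Γ : Ω × Ω → ℝ) (hmeas : Measurable Γ) (hnonneg : ∀ z, 0 ≤ Γ z)
    (Tq : Lp ℂ q μ →L[ℂ] Lp ℂ q μ) (Tp : Lp ℂ p μ →L[ℂ] Lp ℂ p μ)
    (hTq : ∀ f : Lp ℂ q μ, ∀ᵐ x ∂μ, Tq f x = ∫ y, f y * (Γ (y, x) : ℂ) ∂μ)
    (hTp : ∀ f : Lp ℂ p μ, ∀ᵐ x ∂μ, Tp f x = ∫ y, f y * (Γ (y, x) : ℂ) ∂μ)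
    (hKq : IsCompactOperator Tq) (hKp : IsCompactOperator Tp) :
    spectralRadius ℂ Tp = spectralRadius ℂ Tq :=
  spectralRadius_eq_of_compact_general μ q p hqp hp Γ Tq Tp hTq hTp hKq hKp
end

section
/- Let (Ω,μ) be a probability space, let p ∈ [2,∞), and let W be an L^p-digraphon on Ω, i.e., a nonnegative function in L^p(Ω², μ×μ). Define the kernel powers W^k by W^1 = W and W^{k}(x,y) = ∫ W^{k−1}(x,z) W(z,y) dμ(z). Then the spectral radius of the integral kernel operator of W on L^p(Ω) satisfies ρ_p(W) = lim_{k→∞} (‖W^k‖_p)^{1/k}, where ‖·‖_p is the L^p(Ω²) norm. -/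
/-!
Gelfand's formula `‖T ^ n‖ ^ (1 / n) → ρ(T)` reduces the claim to two comparisons between
`‖W^(k+1)‖_p` and operator norms of powers of `T`.

* `T^(k+1)` is the integral operator with kernel `W^(k+1)` (Fubini, justified in `L²`, which
  contains `L^p` on a probability space). Cauchy–Schwarz in `y` gives
  `|(T^(k+1) f)(x)| ≤ ‖f‖_p ‖W^(k+1)(·, x)‖_p`, and integrating in `x` gives
  `‖T^(k+1)‖ ≤ ‖W^(k+1)‖_p`.
* The rows of `W^(k+1)` are the images under `T^k` of the rows of `W`, so
  `‖W^(k+1)(x, ·)‖_p ≤ ‖T^k‖ ‖W(x, ·)‖_p`, and integrating in `x` gives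
  `‖W^(k+1)‖_p ≤ ‖T^k‖ ‖W‖_p`.

After taking `(k+1)`-st roots both bounds tend to `ρ(T)`.
-/

open MeasureTheory ENNReal Filter Topology

noncomputable section

/-- Composition of two kernels: `(A * B)(x,y) = ∫ A(x,z) B(z,y) dμ(z)`. -/
def kcomp {Ω : Type*} [MeasurableSpace Ω] (μ : Measure Ω) (A B : Ω × Ω → ℝ) :
    Ω × Ω → ℝ :=
  fun p => ∫ z, A (p.1, z) * B (z, p.2) ∂μ

/-- Kernel powers: `kpow μ W k` is the `(k+1)`-st power `W^{k+1}` of the kernel `W`,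
i.e. `kpow μ W 0 = W` and `W^{k+1}(x,y) = ∫ W^k(x,z) W(z,y) dμ(z)`. -/
def kpow {Ω : Type*} [MeasurableSpace Ω] (μ : Measure Ω) (W : Ω × Ω → ℝ) :
    ℕ → Ω × Ω → ℝ
  | 0 => W
  | k + 1 => kcomp μ (kpow μ W k) W

namespace MeasureTheory

section MixedNorm

variable {α β E : Type*} [MeasurableSpace α] [MeasurableSpace β] {μ : Measure α} {ν : Measure β}
  [SFinite ν] [NormedAddCommGroup E] {p : ℝ≥0∞} {K : α × β → E}

theorem aemeasurable_eLpNorm_section (hp0 : p ≠ 0) (hptop : p ≠ ∞)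
    (hK : AEStronglyMeasurable K (μ.prod ν)) :
    AEMeasurable (fun x => eLpNorm (fun y => K (x, y)) p ν) μ := by
  simp_rw [eLpNorm_eq_lintegral_rpow_enorm_toReal hp0 hptop]
  exact (hK.enorm.pow_const _).lintegral_prod_right'.pow_const _

theorem lintegral_eLpNorm_section_rpow (hp0 : p ≠ 0) (hptop : p ≠ ∞)
    (hK : AEStronglyMeasurable K (μ.prod ν)) :
    ∫⁻ x, eLpNorm (fun y => K (x, y)) p ν ^ p.toReal ∂μ = eLpNorm K p (μ.prod ν) ^ p.toReal := by
  have hp : p.toReal ≠ 0 := (ENNReal.toReal_pos hp0 hptop).ne'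
  simp_rw [eLpNorm_eq_lintegral_rpow_enorm_toReal hp0 hptop, ← ENNReal.rpow_mul,
    one_div_mul_cancel hp, ENNReal.rpow_one]
  exact (lintegral_prod _ (hK.enorm.pow_const _)).symm

theorem eLpNorm_eLpNorm_section (hp0 : p ≠ 0) (hptop : p ≠ ∞)
    (hK : AEStronglyMeasurable K (μ.prod ν)) :
    eLpNorm (fun x => eLpNorm (fun y => K (x, y)) p ν) p μ = eLpNorm K p (μ.prod ν) := by
  have hp : 0 < p.toReal := ENNReal.toReal_pos hp0 hptop
  rw [eLpNorm_eq_lintegral_rpow_enorm_toReal hp0 hptop]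
  simp_rw [enorm_eq_self]
  rw [lintegral_eLpNorm_section_rpow hp0 hptop hK, ← ENNReal.rpow_mul, mul_one_div_cancel hp.ne',
    ENNReal.rpow_one]

theorem MemLp.ae_memLp_prodMk_left (hp0 : p ≠ 0) (hptop : p ≠ ∞) (hK : MemLp K p (μ.prod ν)) :
    ∀ᵐ x ∂μ, MemLp (fun y => K (x, y)) p ν := by
  have hp : 0 < p.toReal := ENNReal.toReal_pos hp0 hptop
  have hfin : ∫⁻ x, eLpNorm (fun y => K (x, y)) p ν ^ p.toReal ∂μ ≠ ∞ := by
    rw [lintegral_eLpNorm_section_rpow hp0 hptop hK.1]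
    exact ENNReal.rpow_ne_top_of_nonneg hp.le hK.eLpNorm_ne_top
  have hmeas := (aemeasurable_eLpNorm_section hp0 hptop hK.1).pow_const p.toReal
  filter_upwards [ae_lt_top' hmeas hfin, hK.1.prodMk_left] with x hx hxm
  exact ⟨hxm, (ENNReal.rpow_lt_top_iff_of_pos hp).mp hx⟩

theorem eLpNorm_le_mul_eLpNorm_prod_of_ae_le {ε : Type*} [TopologicalSpace ε]
    [ESeminormedAddMonoid ε] {g : α → ε} {c : ℝ≥0∞} (hp0 : p ≠ 0) (hptop : p ≠ ∞)
    (hK : AEStronglyMeasurable K (μ.prod ν))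
    (h : ∀ᵐ x ∂μ, ‖g x‖ₑ ≤ c * eLpNorm (fun y => K (x, y)) p ν) :
    eLpNorm g p μ ≤ c * eLpNorm K p (μ.prod ν) := by
  rw [← eLpNorm_eLpNorm_section hp0 hptop hK]
  exact eLpNorm_le_mul_eLpNorm_of_ae_le_mul'' p
    (aemeasurable_eLpNorm_section hp0 hptop hK).aestronglyMeasurable h

theorem MemLp.ae_memLp_prodMk_right [SFinite μ] (hp0 : p ≠ 0) (hptop : p ≠ ∞)
    (hK : MemLp K p (μ.prod ν)) : ∀ᵐ y ∂ν, MemLp (fun x => K (x, y)) p μ :=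
  (hK.comp_measurePreserving Measure.measurePreserving_swap).ae_memLp_prodMk_left hp0 hptop

end MixedNorm

theorem MemLp.mul_prod_two {α β 𝕜 : Type*} [MeasurableSpace α] [MeasurableSpace β]
    {μ : Measure α} {ν : Measure β} [SFinite ν] [NormedField 𝕜] {f : α → 𝕜} {g : β → 𝕜}
    (hf : MemLp f 2 μ) (hg : MemLp g 2 ν) :
    MemLp (fun q : α × β => f q.1 * g q.2) 2 (μ.prod ν) := by
  have hm : AEStronglyMeasurable (fun q : α × β => f q.1 * g q.2) (μ.prod ν) :=
    hf.1.comp_fst.mul hg.1.comp_snd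
  refine (memLp_two_iff_integrable_sq_norm hm).mpr ?_
  simpa only [norm_mul, mul_pow] using
    (hf.integrable_norm_pow two_ne_zero).mul_prod (hg.integrable_norm_pow two_ne_zero)

theorem eLpNorm_complex_ofReal {α : Type*} [MeasurableSpace α] {μ : Measure α} {p : ℝ≥0∞}
    (f : α → ℝ) : eLpNorm (fun x => (f x : ℂ)) p μ = eLpNorm f p μ :=
  eLpNorm_congr_norm_ae (ae_of_all _ fun _ => Complex.norm_real _)

theorem enorm_integral_mul_ofReal_le {α : Type*} [MeasurableSpace α] {μ : Measure α}
    [IsProbabilityMeasure μ] {p : ℝ≥0∞} (hp : 2 ≤ p) {f : α → ℂ} {k : α → ℝ}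
    (hf : AEStronglyMeasurable f μ) (hk : AEStronglyMeasurable k μ) :
    ‖∫ y, f y * (k y : ℂ) ∂μ‖ₑ ≤ eLpNorm f p μ * eLpNorm k p μ := by
  calc ‖∫ y, f y * (k y : ℂ) ∂μ‖ₑ
      ≤ eLpNorm (fun y => f y * (k y : ℂ)) 1 μ := by
        rw [eLpNorm_one_eq_lintegral_enorm]
        exact enorm_integral_le_lintegral_enorm _
    _ ≤ 1 * eLpNorm f 2 μ * eLpNorm k 2 μ :=
        eLpNorm_le_eLpNorm_mul_eLpNorm_of_nnnorm hf hk (fun a r => a * (r : ℂ)) 1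
          (ae_of_all _ fun y => by simp [nnnorm_mul])
    _ ≤ eLpNorm f p μ * eLpNorm k p μ := by
        rw [one_mul]
        gcongr <;> exact eLpNorm_le_eLpNorm_of_exponent_le hp (by assumption)

theorem integral_integral_mul_eq_integral_mul_integral {α β : Type*} [MeasurableSpace α]
    [MeasurableSpace β] {μ : Measure α} {ν : Measure β} [SFinite μ] [SFinite ν] {f : α → ℂ}
    {K : α × β → ℝ} {g : β → ℝ} (hf : MemLp f 2 μ) (hK : MemLp K 2 (μ.prod ν))
    (hg : MemLp g 2 ν) :
    ∫ z, (∫ y, f y * (K (y, z) : ℂ) ∂μ) * (g z : ℂ) ∂ν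
      = ∫ y, f y * ∫ z, (K (y, z) : ℂ) * (g z : ℂ) ∂ν ∂μ := by
  have hint : Integrable (Function.uncurry fun y z => f y * (K (y, z) : ℂ) * (g z : ℂ))
      (μ.prod ν) := by
    have h : MemLp _ 1 (μ.prod ν) :=
      (hf.mul_prod_two (hg.ofReal (K := ℂ))).mul' (hK.ofReal (K := ℂ))
    rw [memLp_one_iff_integrable] at h
    exact h.congr (ae_of_all _ fun ⟨y, z⟩ => by
      simp only [Function.uncurry_apply_pair, RCLike.ofReal_eq_complex_ofReal]; ring)
  simp_rw [← integral_mul_const, ← integral_const_mul, ← mul_assoc]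
  exact (integral_integral_swap hint).symm

end MeasureTheory

section KernelComposition

variable {Ω : Type*} [MeasurableSpace Ω] {μ : Measure Ω}

theorem ofReal_kcomp (A B : Ω × Ω → ℝ) (q : Ω × Ω) :
    (kcomp μ A B q : ℂ) = ∫ z, (A (q.1, z) : ℂ) * (B (z, q.2) : ℂ) ∂μ := by
  simp only [kcomp, ← Complex.ofReal_mul]
  exact integral_ofReal.symm

theorem Measurable.kcomp [SFinite μ] {A B : Ω × Ω → ℝ} (hA : Measurable A) (hB : Measurable B) :
    Measurable (kcomp μ A B) :=
  ((hA.comp (measurable_fst.fst.prodMk measurable_snd)).mul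
    (hB.comp (measurable_snd.prodMk measurable_fst.snd))).stronglyMeasurable
    |>.integral_prod_right'.measurable

theorem Measurable.kpow [SFinite μ] {W : Ω × Ω → ℝ} (hW : Measurable W) (k : ℕ) :
    Measurable (kpow μ W k) := by
  induction k with
  | zero => exact hW
  | succ k ih => exact ih.kcomp hW

end KernelComposition

section IntegralKernel

variable {Ω : Type*} [MeasurableSpace Ω] {μ : Measure Ω} {p : ℝ≥0∞} [Fact (1 ≤ p)]

def HasIntegralKernel (T : Lp ℂ p μ →L[ℂ] Lp ℂ p μ) (K : Ω × Ω → ℝ) : Prop :=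
  ∀ f : Lp ℂ p μ, ∀ᵐ x ∂μ, T f x = ∫ y, f y * (K (y, x) : ℂ) ∂μ

variable {T S : Lp ℂ p μ →L[ℂ] Lp ℂ p μ} {W K : Ω × Ω → ℝ}

theorem HasIntegralKernel.pow_apply_ae_eq_kpow (hT : HasIntegralKernel T W) {x : Ω}
    {g : Lp ℂ p μ} (hg : ⇑g =ᵐ[μ] fun y => (W (x, y) : ℂ)) (k : ℕ) :
    ⇑((T ^ k) g) =ᵐ[μ] fun y => (kpow μ W k (x, y) : ℂ) := by
  induction k with
  | zero => rw [pow_zero]; exact hg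
  | succ k ih =>
    rw [pow_succ', mul_apply_eq_comp]
    filter_upwards [hT ((T ^ k) g)] with y hy
    rw [hy, kpow, ofReal_kcomp]
    exact integral_congr_ae (ih.mono fun z hz => by dsimp only; rw [hz])

theorem HasIntegralKernel.eLpNorm_kpow_le [SFinite μ] (hptop : p ≠ ∞)
    (hT : HasIntegralKernel T W) (hWm : Measurable W) (hW : MemLp W p (μ.prod μ)) (k : ℕ) :
    eLpNorm (kpow μ W k) p (μ.prod μ) ≤ ‖T ^ k‖ₑ * eLpNorm W p (μ.prod μ) := by
  have hp0 : p ≠ 0 := (zero_lt_one.trans_le Fact.out).ne'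
  rw [← eLpNorm_eLpNorm_section hp0 hptop (hWm.kpow k).aestronglyMeasurable]
  refine eLpNorm_le_mul_eLpNorm_prod_of_ae_le hp0 hptop hW.1 ?_
  filter_upwards [hW.ae_memLp_prodMk_left hp0 hptop] with x hx
  have hx' : MemLp (fun y => (W (x, y) : ℂ)) p μ := hx.ofReal
  calc ‖eLpNorm (fun y => kpow μ W k (x, y)) p μ‖ₑ
      = ‖(T ^ k) (hx'.toLp _)‖ₑ := by
        rw [enorm_eq_self, Lp.enorm_def,
          eLpNorm_congr_ae (hT.pow_apply_ae_eq_kpow hx'.coeFn_toLp k), eLpNorm_complex_ofReal]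
    _ ≤ ‖T ^ k‖ₑ * ‖hx'.toLp _‖ₑ := ContinuousLinearMap.le_opENorm _ _
    _ = ‖T ^ k‖ₑ * eLpNorm (fun y => W (x, y)) p μ := by
        rw [Lp.enorm_def, eLpNorm_congr_ae hx'.coeFn_toLp, eLpNorm_complex_ofReal]

theorem HasIntegralKernel.mul [IsFiniteMeasure μ] (hp2 : 2 ≤ p) (hT : HasIntegralKernel T W)
    (hS : HasIntegralKernel S K) (hK : MemLp K 2 (μ.prod μ))
    (hW : ∀ᵐ x ∂μ, MemLp (fun z => W (z, x)) 2 μ) :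
    HasIntegralKernel (T * S) (kcomp μ K W) := by
  intro f
  filter_upwards [hT (S f), hW] with x hx hWx
  rw [mul_apply_eq_comp, hx, integral_congr_ae ((hS f).mono fun z hz => by rw [hz]),
    integral_integral_mul_eq_integral_mul_integral ((Lp.memLp f).mono_exponent hp2) hK hWx]
  simp_rw [ofReal_kcomp]

theorem HasIntegralKernel.pow_succ_kpow [IsFiniteMeasure μ] (hp2 : 2 ≤ p)
    (hT : HasIntegralKernel T W) (hK : ∀ k, MemLp (kpow μ W k) 2 (μ.prod μ)) (k : ℕ) :
    HasIntegralKernel (T ^ (k + 1)) (kpow μ W k) := by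
  induction k with
  | zero => rw [zero_add, pow_one]; exact hT
  | succ k ih =>
    rw [pow_succ']
    exact hT.mul hp2 ih (hK k) ((hK 0).ae_memLp_prodMk_right two_ne_zero ofNat_ne_top)

theorem HasIntegralKernel.enorm_le [IsProbabilityMeasure μ] (hp2 : 2 ≤ p) (hptop : p ≠ ∞)
    (hS : HasIntegralKernel S K) (hK : AEStronglyMeasurable K (μ.prod μ)) :
    ‖S‖ₑ ≤ eLpNorm K p (μ.prod μ) := by
  have hp0 : p ≠ 0 := (zero_lt_two.trans_le hp2).ne'
  have hKs : AEStronglyMeasurable (fun q => K q.swap) (μ.prod μ) :=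
    hK.comp_measurePreserving Measure.measurePreserving_swap
  refine S.opENorm_le_bound fun f => ?_
  rw [Lp.enorm_def, eLpNorm_congr_ae (hS f), Lp.enorm_def, mul_comm,
    ← eLpNorm_comp_measurePreserving hK Measure.measurePreserving_swap]
  refine eLpNorm_le_mul_eLpNorm_prod_of_ae_le hp0 hptop hKs ?_
  filter_upwards [hKs.prodMk_left] with x hx
  exact enorm_integral_mul_ofReal_le hp2 (Lp.aestronglyMeasurable f) hx

end IntegralKernel

theorem ENNReal.tendsto_rpow_inv_add_one_of_tendsto_rpow_one_div {u : ℕ → ℝ≥0∞} {L : ℝ≥0∞}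
    (hL : L ≠ ∞) (h : Tendsto (fun n : ℕ => u n ^ (1 / n : ℝ)) atTop (𝓝 L)) :
    Tendsto (fun n : ℕ => u n ^ ((n : ℝ) + 1)⁻¹) atTop (𝓝 L) := by
  lift L to NNReal using hL
  have hv : Tendsto (fun n : ℕ => (u n ^ (1 / n : ℝ)).toNNReal) atTop (𝓝 L) :=
    (ENNReal.tendsto_toNNReal coe_ne_top).comp h
  have hw := hv.nnrpow (tendsto_natCast_div_add_atTop (1 : ℝ)) (Or.inr one_pos)
  rw [NNReal.rpow_one] at hw
  refine (ENNReal.tendsto_coe.mpr hw).congr' ?_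
  filter_upwards [h.eventually (gt_mem_nhds coe_lt_top), eventually_ne_atTop 0] with n hn hn0
  rw [ENNReal.coe_rpow_of_nonneg _ (by positivity), coe_toNNReal hn.ne, ← ENNReal.rpow_mul]
  congr 1
  field_simp

theorem ENNReal.tendsto_const_rpow_inv_add_one {c : ℝ≥0∞} (h0 : c ≠ 0) (htop : c ≠ ∞) :
    Tendsto (fun n : ℕ => c ^ ((n : ℝ) + 1)⁻¹) atTop (𝓝 1) := by
  lift c to NNReal using htop
  have hexp : Tendsto (fun n : ℕ => ((n : ℝ) + 1)⁻¹) atTop (𝓝 0) := by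
    simpa only [one_div] using tendsto_one_div_add_atTop_nhds_zero_nat (𝕜 := ℝ)
  have hc := (tendsto_const_nhds (x := c)).nnrpow hexp (Or.inl (by simpa using h0))
  rw [NNReal.rpow_zero] at hc
  refine (ENNReal.tendsto_coe.mpr hc).congr fun n => ?_
  rw [ENNReal.coe_rpow_of_nonneg _ (by positivity)]

theorem spectrum.tendsto_rpow_inv_add_one_of_le {A : Type*} [NormedRing A] [NormedAlgebra ℂ A]
    [CompleteSpace A] (a : A) {b : ℕ → ℝ≥0∞} {c : ℝ≥0∞} (hc : c ≠ ∞)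
    (hlow : ∀ n, ‖a ^ (n + 1)‖ₑ ≤ b n) (hupp : ∀ n, b n ≤ ‖a ^ n‖ₑ * c) :
    Tendsto (fun n : ℕ => b n ^ ((n : ℝ) + 1)⁻¹) atTop (𝓝 (spectralRadius ℂ a)) := by
  have hgelfand := spectrum.pow_nnnorm_pow_one_div_tendsto_nhds_spectralRadius a
  have hρ : spectralRadius ℂ a ≠ ∞ :=
    ((spectrum.spectralRadius_le_pow_nnnorm_pow_one_div ℂ a 0).trans_lt (by simp [mul_lt_top])).ne
  have hlow' : Tendsto (fun n : ℕ => ‖a ^ (n + 1)‖ₑ ^ ((n : ℝ) + 1)⁻¹) atTop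
      (𝓝 (spectralRadius ℂ a)) :=
    (hgelfand.comp (tendsto_add_atTop_nat 1)).congr fun n => by simp [enorm_eq_nnnorm]
  -- `c + 1` rather than `c`: its roots tend to `1` also when `c = 0`.
  have hupp' : Tendsto (fun n : ℕ => (‖a ^ n‖ₑ * (c + 1)) ^ ((n : ℝ) + 1)⁻¹) atTop
      (𝓝 (spectralRadius ℂ a)) := by
    have h := ENNReal.Tendsto.mul
      (ENNReal.tendsto_rpow_inv_add_one_of_tendsto_rpow_one_div hρ hgelfand) (Or.inr one_ne_top)
      (ENNReal.tendsto_const_rpow_inv_add_one (c := c + 1) (by simp) (by simpa using hc))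
      (Or.inr hρ)
    rw [mul_one] at h
    exact h.congr fun n => (ENNReal.mul_rpow_of_nonneg _ _ (by positivity)).symm
  refine tendsto_of_tendsto_of_tendsto_of_le_of_le hlow' hupp' (fun n => ?_) (fun n => ?_)
  · exact ENNReal.rpow_le_rpow (hlow n) (by positivity)
  · exact ENNReal.rpow_le_rpow ((hupp n).trans (by gcongr; exact le_self_add)) (by positivity)

theorem gelfand_formula_Lp_general
    {Ω : Type*} [MeasurableSpace Ω] (μ : Measure Ω) [IsProbabilityMeasure μ]
    (p : ℝ≥0∞) [Fact (1 ≤ p)] (hp2 : 2 ≤ p) (hptop : p ≠ ∞)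
    (W : Ω × Ω → ℝ) (hmeas : Measurable W)
    (hW : MemLp W p (μ.prod μ))
    -- the integral kernel operator of `W` on `L^p(Ω)`
    (T : Lp ℂ p μ →L[ℂ] Lp ℂ p μ)
    (hT : ∀ f : Lp ℂ p μ, ∀ᵐ x ∂μ, T f x = ∫ y, f y * (W (y, x) : ℂ) ∂μ) :
    Tendsto (fun k : ℕ => (eLpNorm (kpow μ W k) p (μ.prod μ)) ^ (((k : ℝ) + 1)⁻¹))
      atTop (𝓝 (spectralRadius ℂ T)) := by
  have hkernel : HasIntegralKernel T W := hT
  have hupper := hkernel.eLpNorm_kpow_le hptop hmeas hW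
  have hkpow : ∀ k, MemLp (kpow μ W k) 2 (μ.prod μ) := fun k =>
    MemLp.mono_exponent ⟨(hmeas.kpow k).aestronglyMeasurable,
      (hupper k).trans_lt (mul_lt_top enorm_lt_top hW.eLpNorm_lt_top)⟩ hp2
  have hlower : ∀ k, ‖T ^ (k + 1)‖ₑ ≤ eLpNorm (kpow μ W k) p (μ.prod μ) := fun k =>
    (hkernel.pow_succ_kpow hp2 hkpow k).enorm_le hp2 hptop (hmeas.kpow k).aestronglyMeasurable
  exact spectrum.tendsto_rpow_inv_add_one_of_le T hW.eLpNorm_ne_top hlower hupper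

/-- For an `L^p`-digraphon `W` (`2 ≤ p < ∞`), the spectral radius of
its integral kernel operator on `L^p(Ω)` satisfies the Gelfand-type formula
`ρ_p(W) = lim_k (‖W^k‖_p)^{1/k}` (below, `kpow μ W k = W^{k+1}`). -/
theorem gelfand_formula_Lp
    {Ω : Type*} [MeasurableSpace Ω] (μ : Measure Ω) [IsProbabilityMeasure μ]
    (p : ℝ≥0∞) [Fact (1 ≤ p)] (hp2 : 2 ≤ p) (hptop : p ≠ ∞)
    (W : Ω × Ω → ℝ) (hmeas : Measurable W) (hnonneg : ∀ z, 0 ≤ W z)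
    (hW : MemLp W p (μ.prod μ))
    -- the integral kernel operator of `W` on `L^p(Ω)`
    (T : Lp ℂ p μ →L[ℂ] Lp ℂ p μ)
    (hT : ∀ f : Lp ℂ p μ, ∀ᵐ x ∂μ, T f x = ∫ y, f y * (W (y, x) : ℂ) ∂μ) :
    Tendsto (fun k : ℕ => (eLpNorm (kpow μ W k) p (μ.prod μ)) ^ (((k : ℝ) + 1)⁻¹))
      atTop (𝓝 (spectralRadius ℂ T)) :=
  gelfand_formula_Lp_general μ p hp2 hptop W hmeas hW T hT
end
end
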